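/- arXiv:1911.08175 — 6 statements merged into one kernel-verified Lean document; each statement's English description precedes it below -/
import Mathlib

section
/- If M(s) is a closed operator (i.e., its graph is closed in X × X) for μ-almost every s ∈ Ω, then the operator-valued multiplication operator (ℳ, D(ℳ)) is a closed operator on L^p(Ω,X) (i.e., its graph is closed in L^p(Ω,X) × L^p(Ω,X)). -/
open MeasureTheory Filter
open scoped ENNReal NNReal

noncomputable section

/-- `R` is the resolvent operator of the (possibly unbounded) operator `A` at `lam`. -/
def IsResolvent {X : Type*} [NormedAddCommGroup X] [NormedSpace ℂ X]
    (A : X →ₗ.[ℂ] X) (lam : ℂ) (R : X →L[ℂ] X) : Prop :=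
  ∃ hR : ∀ x : X, R x ∈ A.domain,
    (∀ x : X, lam • R x - A ⟨R x, hR x⟩ = x) ∧
    ∀ y : A.domain, R (lam • (y : X) - A y) = y

def InResolventSet {X : Type*} [NormedAddCommGroup X] [NormedSpace ℂ X]
    (A : X →ₗ.[ℂ] X) (lam : ℂ) : Prop :=
  ∃ R : X →L[ℂ] X, IsResolvent A lam R

def IsBoundedInverse {X : Type*} [NormedAddCommGroup X] [NormedSpace ℂ X]
    (A : X →ₗ.[ℂ] X) (B : X →L[ℂ] X) : Prop :=
  ∃ hB : ∀ x : X, B x ∈ A.domain,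
    (∀ x : X, A ⟨B x, hB x⟩ = x) ∧ ∀ y : A.domain, B (A y) = y

/-- `𝓜` is the operator-valued multiplication operator on `L^p(Ω,X)` with fibers `M s`. -/
def IsMulOp {Ω : Type*} [MeasurableSpace Ω] (μ : Measure Ω)
    {X : Type*} [NormedAddCommGroup X] [NormedSpace ℂ X] (p : ℝ≥0∞) [Fact (1 ≤ p)]
    (M : Ω → X →ₗ.[ℂ] X) (𝓜 : Lp X p μ →ₗ.[ℂ] Lp X p μ) : Prop :=
  (∀ f : Lp X p μ, f ∈ 𝓜.domain ↔
    ∃ g : Lp X p μ, ∀ᵐ s ∂μ, ∃ h : f s ∈ (M s).domain, g s = M s ⟨f s, h⟩) ∧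
  ∀ f : 𝓜.domain, ∀ᵐ s ∂μ, ∃ h : (f : Lp X p μ) s ∈ (M s).domain,
    (𝓜 f) s = M s ⟨(f : Lp X p μ) s, h⟩

def IsC0Semigroup {Y : Type*} [NormedAddCommGroup Y] [NormedSpace ℂ Y]
    (T : ℝ → Y →L[ℂ] Y) : Prop :=
  T 0 = 1 ∧ (∀ t r : ℝ, 0 ≤ t → 0 ≤ r → T (t + r) = T t ∘L T r) ∧
  ∀ y : Y, ContinuousOn (fun t => T t y) (Set.Ici (0 : ℝ))

def IsGenerator {Y : Type*} [NormedAddCommGroup Y] [NormedSpace ℂ Y]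
    (T : ℝ → Y →L[ℂ] Y) (A : Y →ₗ.[ℂ] Y) : Prop :=
  (∀ y : Y, y ∈ A.domain ↔
    ∃ z : Y, Tendsto (fun t : ℝ => t⁻¹ • (T t y - y)) (nhdsWithin 0 (Set.Ioi 0)) (nhds z)) ∧
  ∀ y : A.domain, Tendsto (fun t : ℝ => t⁻¹ • (T t (y : Y) - (y : Y)))
    (nhdsWithin 0 (Set.Ioi 0)) (nhds (A y))

/-- If the fiber operators `M s` are closed for `μ`-a.e. `s`, then the
operator-valued multiplication operator `𝓜` on `L^p(Ω,X)` is closed. -/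
theorem closedness_of_multiplication_operator
    {Ω : Type*} [MeasurableSpace Ω] {μ : Measure Ω} [SigmaFinite μ]
    {X : Type*} [NormedAddCommGroup X] [NormedSpace ℂ X] [CompleteSpace X]
    {p : ℝ≥0∞} [Fact (1 ≤ p)] (hp : p ≠ ∞)
    (M : Ω → X →ₗ.[ℂ] X) (𝓜 : Lp X p μ →ₗ.[ℂ] Lp X p μ)
    (hMul : IsMulOp μ p M 𝓜)
    (hclosed : ∀ᵐ s ∂μ, IsClosed ((M s).graph : Set (X × X))) :
    IsClosed (𝓜.graph : Set (Lp X p μ × Lp X p μ)) := by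
  refine IsSeqClosed.isClosed ?_
  intro fg FG hmem hlim
  -- components
  have hlim1 : Tendsto (fun n => (fg n).1) atTop (nhds FG.1) :=
    (continuous_fst.tendsto FG).comp hlim
  have hlim2 : Tendsto (fun n => (fg n).2) atTop (nhds FG.2) :=
    (continuous_snd.tendsto FG).comp hlim
  -- description of graph elements
  choose d hd1 hd2 using fun n => (LinearPMap.mem_graph_iff 𝓜).mp (hmem n)
  -- a.e. subsequence for first components
  obtain ⟨ns, hns_mono, hns⟩ :=
    (tendstoInMeasure_of_tendsto_Lp hlim1).exists_seq_tendsto_ae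
  have hlim2' : Tendsto (fun i => (fg (ns i)).2) atTop (nhds FG.2) :=
    hlim2.comp hns_mono.tendsto_atTop
  obtain ⟨ms, hms_mono, hms⟩ :=
    (tendstoInMeasure_of_tendsto_Lp hlim2').exists_seq_tendsto_ae
  have hns' : ∀ᵐ s ∂μ, Tendsto (fun i => (fg (ns (ms i)) : Lp X p μ × Lp X p μ).1 s)
      atTop (nhds (FG.1 s)) := by
    filter_upwards [hns] with s h using h.comp hms_mono.tendsto_atTop
  -- fiber relation for each n
  have hfib : ∀ᵐ s ∂μ, ∀ n : ℕ, ∃ h : (fg n).1 s ∈ (M s).domain,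
      (fg n).2 s = M s ⟨(fg n).1 s, h⟩ := by
    rw [MeasureTheory.ae_all_iff]
    intro n
    rw [← hd1 n, ← hd2 n]
    exact hMul.2 (d n)
  -- a.e. closedness argument
  have hae : ∀ᵐ s ∂μ, ∃ h : FG.1 s ∈ (M s).domain, FG.2 s = M s ⟨FG.1 s, h⟩ := by
    filter_upwards [hns', hms, hclosed, hfib] with s h1 h2 hcl hf
    have hmemg : ∀ i, ((fg (ns (ms i))).1 s, (fg (ns (ms i))).2 s) ∈
        ((M s).graph : Set (X × X)) := by
      intro i
      obtain ⟨h, heq⟩ := hf (ns (ms i))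
      exact SetLike.mem_coe.mpr
        ((LinearPMap.mem_graph_iff _).mpr ⟨⟨(fg (ns (ms i))).1 s, h⟩, rfl, heq.symm⟩)
    have hptlim : Tendsto (fun i => ((fg (ns (ms i))).1 s, (fg (ns (ms i))).2 s)) atTop
        (nhds (FG.1 s, FG.2 s)) := h1.prodMk_nhds h2
    have : (FG.1 s, FG.2 s) ∈ ((M s).graph : Set (X × X)) :=
      hcl.mem_of_tendsto hptlim (Filter.Eventually.of_forall hmemg)
    rw [SetLike.mem_coe, LinearPMap.mem_graph_iff] at this
    obtain ⟨y, hy1, hy2⟩ := this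
    have hy1' : (y : X) = FG.1 s := hy1
    have hy2' : M s y = FG.2 s := hy2
    refine ⟨hy1' ▸ y.2, ?_⟩
    rw [← hy2']
    congr 1
    exact Subtype.ext hy1'
  have hdom : FG.1 ∈ 𝓜.domain := (hMul.1 FG.1).mpr ⟨FG.2, hae⟩
  rw [SetLike.mem_coe, LinearPMap.mem_graph_iff]
  refine ⟨⟨FG.1, hdom⟩, rfl, ?_⟩
  refine MeasureTheory.Lp.ext ?_
  filter_upwards [hMul.2 ⟨FG.1, hdom⟩, hae] with s hs1 hs2
  obtain ⟨h, heq⟩ := hs1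
  obtain ⟨h', heq'⟩ := hs2
  rw [heq, heq']
end
end

section
/- Let (ℳ, D(ℳ)) be an operator-valued multiplication operator on L^p(Ω,X) whose fiber operators M(s) are closed for μ-almost every s, and let λ ∈ ℂ. If λ ∈ ρ(M(s)) for μ-almost every s ∈ Ω and the map s ↦ R(λ,M(s)) belongs to L^∞(Ω,L_s(X)), then λ ∈ ρ(ℳ) and (R(λ,ℳ)f)(s) = R(λ,M(s))f(s) for all f ∈ L^p(Ω,X) and μ-almost every s ∈ Ω. -/
/-! The candidate resolvent is the fiberwise operator `f ↦ (s ↦ R(λ,M(s)) f(s))`. The strong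
`L^∞` hypothesis makes `x ↦ (s ↦ R(λ,M(s)) x)` a linear map `X → L^∞(Ω,X)` with closed graph, so
the closed graph theorem gives one constant `C` with `‖R(λ,M(s)) x‖ ≤ C ‖x‖` a.e. for each `x`.
Since a strongly measurable `f` takes its values a.e. in a separable set, countably many of these
bounds give `‖R(λ,M(s)) f(s)‖ ≤ C ‖f(s)‖` a.e., so the fiberwise operator is bounded on `L^p`;
the two resolvent identities then hold fiber by fiber. -/

open MeasureTheory Filter
open scoped ENNReal NNReal

noncomputable section

namespace MeasureTheory

section Fiberwise

variable {Ω E F 𝕜 : Type*} [MeasurableSpace Ω] {μ : Measure Ω}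
  [NormedAddCommGroup E] [NormedAddCommGroup F]

theorem Lp.ae_norm_le_norm_top (f : Lp E ∞ μ) : ∀ᵐ s ∂μ, ‖f s‖ ≤ ‖f‖ := by
  filter_upwards [ae_le_eLpNormEssSup (f := (f : Ω → E)) (μ := μ)] with s hs
  rw [← eLpNorm_exponent_top] at hs
  rw [Lp.norm_def, ← ofReal_norm] at *
  exact (ENNReal.ofReal_le_iff_le_toReal (Lp.eLpNorm_ne_top f)).1 hs

variable [NormedField 𝕜] [NormedSpace 𝕜 E] [NormedSpace 𝕜 F] {A : Ω → E →L[𝕜] F}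

theorem AEStronglyMeasurable.clm_apply_of_forall
    (hA : ∀ x, AEStronglyMeasurable (fun s => A s x) μ) {f : Ω → E}
    (hf : AEStronglyMeasurable f μ) : AEStronglyMeasurable (fun s => A s (f s)) μ := by
  have h_simple : ∀ φ : SimpleFunc Ω E, AEStronglyMeasurable (fun s => A s (φ s)) μ := by
    intro φ
    induction φ using SimpleFunc.induction with
    | @const c S hS =>
      convert (hA c).indicator hS using 1
      ext s
      by_cases h : s ∈ S <;> simp [SimpleFunc.piecewise_apply, h]
    | @add φ ψ _ hφ hψ =>
      simp only [SimpleFunc.coe_add, Pi.add_apply, map_add]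
      exact hφ.add hψ
  have hmk := hf.stronglyMeasurable_mk
  have hA_mk : AEStronglyMeasurable (fun s => A s (hf.mk f s)) μ :=
    aestronglyMeasurable_of_tendsto_ae atTop (fun n => h_simple (hmk.approx n)) <|
      Eventually.of_forall fun s => ((A s).continuous.tendsto _).comp (hmk.tendsto_approx s)
  refine hA_mk.congr ?_
  filter_upwards [hf.ae_eq_mk] with s hs
  rw [hs]

theorem ae_norm_clm_apply_le_of_forall {C : ℝ} (hA : ∀ x, ∀ᵐ s ∂μ, ‖A s x‖ ≤ C * ‖x‖)
    {f : Ω → E} (hf : AEStronglyMeasurable f μ) : ∀ᵐ s ∂μ, ‖A s (f s)‖ ≤ C * ‖f s‖ := by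
  obtain ⟨c, hc_count, hc_dense⟩ := hf.stronglyMeasurable_mk.isSeparable_range
  have hc : ∀ᵐ s ∂μ, ∀ x ∈ c, ‖A s x‖ ≤ C * ‖x‖ := (ae_ball_iff hc_count).2 fun x _ => hA x
  filter_upwards [hc, hf.ae_eq_mk] with s hs hfs
  have hclosed : IsClosed {y : E | ‖A s y‖ ≤ C * ‖y‖} :=
    isClosed_le (A s).continuous.norm (continuous_const.mul continuous_norm)
  rw [hfs]
  exact closure_minimal hs hclosed (hc_dense (Set.mem_range_self s))

variable {p : ℝ≥0∞}

theorem memLp_clm_apply_of_forall {C : ℝ} (hmeas : ∀ x, AEStronglyMeasurable (fun s => A s x) μ)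
    (hbound : ∀ x, ∀ᵐ s ∂μ, ‖A s x‖ ≤ C * ‖x‖) (f : Lp E p μ) :
    MemLp (fun s => A s (f s)) p μ :=
  (Lp.memLp f).of_le_mul ((Lp.aestronglyMeasurable f).clm_apply_of_forall hmeas)
    (ae_norm_clm_apply_le_of_forall hbound (Lp.aestronglyMeasurable f))

variable [Fact (1 ≤ p)] (A) in
def Lp.fiberwiseCLM (C : ℝ) (hmeas : ∀ x, AEStronglyMeasurable (fun s => A s x) μ)
    (hbound : ∀ x, ∀ᵐ s ∂μ, ‖A s x‖ ≤ C * ‖x‖) : Lp E p μ →L[𝕜] Lp F p μ :=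
  LinearMap.mkContinuous
    { toFun := fun f => (memLp_clm_apply_of_forall hmeas hbound f).toLp _
      map_add' := fun f g => by
        rw [← MemLp.toLp_add]
        refine MemLp.toLp_congr _ _ ?_
        filter_upwards [Lp.coeFn_add f g] with s hs
        rw [hs, Pi.add_apply, map_add, Pi.add_apply]
      map_smul' := fun c f => by
        rw [RingHom.id_apply, ← MemLp.toLp_const_smul]
        refine MemLp.toLp_congr _ _ ?_
        filter_upwards [Lp.coeFn_smul c f] with s hs
        rw [hs, Pi.smul_apply, map_smul, Pi.smul_apply] }
    C fun f => Lp.norm_le_mul_norm_of_ae_le_mul <| by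
      filter_upwards [MemLp.coeFn_toLp (memLp_clm_apply_of_forall hmeas hbound f),
        ae_norm_clm_apply_le_of_forall hbound (Lp.aestronglyMeasurable f)] with s hs hle
      simpa [hs] using hle

theorem Lp.coeFn_fiberwiseCLM [Fact (1 ≤ p)] {C : ℝ}
    (hmeas : ∀ x, AEStronglyMeasurable (fun s => A s x) μ)
    (hbound : ∀ x, ∀ᵐ s ∂μ, ‖A s x‖ ≤ C * ‖x‖) (f : Lp E p μ) :
    Lp.fiberwiseCLM (p := p) A C hmeas hbound f =ᵐ[μ] fun s => A s (f s) :=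
  MemLp.coeFn_toLp (memLp_clm_apply_of_forall hmeas hbound f)

variable (A) in
def Lp.familyApplyₗ (q : ℝ≥0∞) (hA : ∀ x, MemLp (fun s => A s x) q μ) : E →ₗ[𝕜] Lp F q μ where
  toFun x := (hA x).toLp _
  map_add' x y := by
    rw [← MemLp.toLp_add]
    exact MemLp.toLp_congr _ _ (Eventually.of_forall fun s => map_add (A s) x y)
  map_smul' c x := by
    rw [RingHom.id_apply, ← MemLp.toLp_const_smul]
    exact MemLp.toLp_congr _ _ (Eventually.of_forall fun s => map_smul (A s) c x)

end Fiberwise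

section ClosedGraph

variable {Ω E F 𝕜 : Type*} [MeasurableSpace Ω] {μ : Measure Ω} [NontriviallyNormedField 𝕜]
  [NormedAddCommGroup E] [NormedSpace 𝕜 E] [CompleteSpace E]
  [NormedAddCommGroup F] [NormedSpace 𝕜 F] [CompleteSpace F] {A : Ω → E →L[𝕜] F}

theorem continuous_familyApplyₗ_top (hA : ∀ x, MemLp (fun s => A s x) ∞ μ) :
    Continuous (Lp.familyApplyₗ A ∞ hA) := by
  set T := Lp.familyApplyₗ A ∞ hA
  have hT : ∀ x, (T x : Ω → F) =ᵐ[μ] fun s => A s x := fun x => MemLp.coeFn_toLp (hA x)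
  refine T.continuous_of_seq_closed_graph fun u x g hu hTu => ?_
  -- `L^∞` convergence gives convergence a.e., and `A s` is continuous on each fiber
  have hdist : ∀ n, ∀ᵐ s ∂μ, ‖A s (u n) - g s‖ ≤ ‖T (u n) - g‖ := fun n => by
    filter_upwards [Lp.ae_norm_le_norm_top (T (u n) - g), Lp.coeFn_sub (T (u n)) g, hT (u n)]
      with s hs hsub hTs
    rwa [hsub, Pi.sub_apply, hTs] at hs
  have hTu' : Tendsto (fun n => ‖T (u n) - g‖) atTop (nhds 0) :=
    tendsto_iff_norm_sub_tendsto_zero.1 hTu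
  refine (Lp.ext ?_).symm
  filter_upwards [ae_all_iff.2 hdist, hT x] with s hs hxs
  rw [hxs]
  refine tendsto_nhds_unique (((A s).continuous.tendsto x).comp hu) ?_
  exact tendsto_iff_norm_sub_tendsto_zero.2 (squeeze_zero (fun n => norm_nonneg _) hs hTu')

theorem exists_ae_norm_clm_apply_le_of_memLp_top (hA : ∀ x, MemLp (fun s => A s x) ∞ μ) :
    ∃ C, ∀ x, ∀ᵐ s ∂μ, ‖A s x‖ ≤ C * ‖x‖ := by
  let T : E →L[𝕜] Lp F ∞ μ := ⟨Lp.familyApplyₗ A ∞ hA, continuous_familyApplyₗ_top hA⟩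
  refine ⟨‖T‖, fun x => ?_⟩
  filter_upwards [Lp.ae_norm_le_norm_top (T x), MemLp.coeFn_toLp (hA x)] with s hs hTs
  rw [← hTs]
  exact hs.trans (T.le_opNorm x)

end ClosedGraph

end MeasureTheory

theorem IsMulOp.isResolvent_of_ae_eq {Ω : Type*} [MeasurableSpace Ω] {μ : Measure Ω}
    {X : Type*} [NormedAddCommGroup X] [NormedSpace ℂ X] {p : ℝ≥0∞} [Fact (1 ≤ p)]
    {M : Ω → X →ₗ.[ℂ] X} {𝓜 : Lp X p μ →ₗ.[ℂ] Lp X p μ} (hMul : IsMulOp μ p M 𝓜)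
    {lam : ℂ} {Rfib : Ω → X →L[ℂ] X} (hres : ∀ᵐ s ∂μ, IsResolvent (M s) lam (Rfib s))
    {R : Lp X p μ →L[ℂ] Lp X p μ} (hR : ∀ f, R f =ᵐ[μ] fun s => Rfib s (f s)) :
    IsResolvent 𝓜 lam R := by
  have hdom : ∀ f, R f ∈ 𝓜.domain := fun f => (hMul.1 _).2 ⟨lam • R f - f, by
    filter_upwards [hres, hR f, Lp.coeFn_sub (lam • R f) f, Lp.coeFn_smul lam (R f)]
      with s ⟨hRs, hleft, _⟩ hRf hsub hsmul
    rw [hRf]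
    refine ⟨hRs (f s), ?_⟩
    rw [hsub, Pi.sub_apply, hsmul, Pi.smul_apply, hRf]
    exact sub_eq_iff_eq_add.2 (sub_eq_iff_eq_add'.1 (hleft (f s)))⟩
  refine ⟨hdom, fun f => Lp.ext ?_, fun y => Lp.ext ?_⟩
  · filter_upwards [hres, hR f, hMul.2 ⟨R f, hdom f⟩,
      Lp.coeFn_sub (lam • R f) (𝓜 ⟨R f, hdom f⟩), Lp.coeFn_smul lam (R f)]
      with s ⟨hRs, hleft, _⟩ hRf ⟨hd, hM⟩ hsub hsmul
    have hpt : (⟨R f s, hd⟩ : (M s).domain) = ⟨_, hRs (f s)⟩ := Subtype.ext hRf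
    rw [hsub, Pi.sub_apply, hsmul, Pi.smul_apply, hM, hpt, hRf]
    exact hleft (f s)
  · filter_upwards [hres, hR (lam • (y : Lp X p μ) - 𝓜 y), hMul.2 y,
      Lp.coeFn_sub (lam • (y : Lp X p μ)) (𝓜 y), Lp.coeFn_smul lam (y : Lp X p μ)]
      with s ⟨_, _, hright⟩ hRs ⟨hd, hM⟩ hsub hsmul
    rw [hRs, hsub, Pi.sub_apply, hsmul, Pi.smul_apply, hM]
    exact hright ⟨_, hd⟩

theorem fiber_resolvents_yield_resolvent_of_multiplication_operator_general
    {Ω : Type*} [MeasurableSpace Ω] {μ : Measure Ω}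
    {X : Type*} [NormedAddCommGroup X] [NormedSpace ℂ X] [CompleteSpace X]
    {p : ℝ≥0∞} [Fact (1 ≤ p)]
    (M : Ω → X →ₗ.[ℂ] X) (𝓜 : Lp X p μ →ₗ.[ℂ] Lp X p μ)
    (hMul : IsMulOp μ p M 𝓜)
    (lam : ℂ) (Rfib : Ω → X →L[ℂ] X)
    (hres : ∀ᵐ s ∂μ, IsResolvent (M s) lam (Rfib s))
    (hLinf : ∀ x : X, MemLp (fun s => Rfib s x) ∞ μ) :
    ∃ R : Lp X p μ →L[ℂ] Lp X p μ, IsResolvent 𝓜 lam R ∧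
      ∀ f : Lp X p μ, ∀ᵐ s ∂μ, (R f) s = Rfib s (f s) := by
  obtain ⟨C, hC⟩ := exists_ae_norm_clm_apply_le_of_memLp_top hLinf
  have hR := Lp.coeFn_fiberwiseCLM (p := p) (fun x => (hLinf x).aestronglyMeasurable) hC
  exact ⟨_, hMul.isResolvent_of_ae_eq hres hR, hR⟩

/-- If `λ ∈ ρ(M(s))` for a.e. `s` and `s ↦ R(λ,M(s))` belongs to
`L^∞(Ω,L_s(X))`, then `λ ∈ ρ(𝓜)` and the resolvent of `𝓜` acts fiberwise as `R(λ,M(s))`. -/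
theorem fiber_resolvents_yield_resolvent_of_multiplication_operator
    {Ω : Type*} [MeasurableSpace Ω] {μ : Measure Ω} [SigmaFinite μ]
    {X : Type*} [NormedAddCommGroup X] [NormedSpace ℂ X] [CompleteSpace X]
    {p : ℝ≥0∞} [Fact (1 ≤ p)] (hp : p ≠ ∞)
    (M : Ω → X →ₗ.[ℂ] X) (𝓜 : Lp X p μ →ₗ.[ℂ] Lp X p μ)
    (hMul : IsMulOp μ p M 𝓜)
    (hclosed : ∀ᵐ s ∂μ, IsClosed ((M s).graph : Set (X × X)))
    (lam : ℂ) (Rfib : Ω → X →L[ℂ] X)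
    (hres : ∀ᵐ s ∂μ, IsResolvent (M s) lam (Rfib s))
    (hLinf : ∀ x : X, MemLp (fun s => Rfib s x) ∞ μ) :
    ∃ R : Lp X p μ →L[ℂ] Lp X p μ, IsResolvent 𝓜 lam R ∧
      ∀ f : Lp X p μ, ∀ᵐ s ∂μ, (R f) s = Rfib s (f s) :=
  fiber_resolvents_yield_resolvent_of_multiplication_operator_general M 𝓜 hMul lam Rfib hres hLinf
end
end

section
/- Let (ℳ, D(ℳ)) be an operator-valued multiplication operator on L^p(Ω,X) with fiber operators (M(s), D(M(s)))_{s∈Ω}, generating a multiplication semigroup (𝒯(t))_{t≥0} of type (M,ω), where for μ-almost every s the fiber operator M(s) generates a C₀-semigroup (T_s(t))_{t≥0} of type (M,ω) on X with (𝒯(t)f)(s) = T_s(t)f(s) μ-a.e., and assume 0 ∈ ρ(M(s)) for μ-almost every s. Let X_{-1,s} be the extrapolation space of X with respect to M(s), let M_{-1}(s) and (T_{-1,s}(t))_{t≥0} be the extrapolated operator and semigroup, and let 𝒳 := { f ∈ ∏_{s∈Ω} X_{-1,s} : there exists g ∈ L^p(Ω,X) with f(s) = M_{-1}(s)g(s)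 for μ-a.e. s }, equipped with the norm ‖f‖_𝒳 := (∫_Ω ‖f(s)‖_{-1,s}^p dμ(s))^{1/p}. Then (S(t)f)(s) := T_{-1,s}(t)f(s), for t ≥ 0, f ∈ 𝒳, defines a C₀-semigroup (S(t))_{t≥0} on 𝒳 which extends (𝒯(t))_{t≥0}, and its generator is the operator ℳ_{-1} given by (ℳ_{-1}f)(s) = M_{-1}(s)f(s) with domain D(ℳ_{-1}) = L^p(Ω,X). -/
/-!
Since every `M₋₁(s)` is an isometry of `X` onto `X₋₁,s`, the map sending `f ∈ 𝒳` to the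
`g ∈ L^p(Ω,X)` with `f(s) = M₋₁(s) g(s)` is an isometric isomorphism `𝒳 ≅ L^p(Ω,X)`.
`S(t)` is the conjugate of `𝒯(t)` under it, so it is a `C₀`-semigroup whose generator is the
conjugate of `ℳ`. The fiber formula comes from `T₋₁,s(t) M₋₁(s) = M₋₁(s) T_s(t)`, and the
domain and action of the generator are read off fiberwise from `0 ∈ ρ(M(s))`:
`M(s) x = y` iff `M₋₁(s) x = j_s y`.
-/

open MeasureTheory Filter
open scoped ENNReal NNReal

noncomputable section

open Topology

section Semigroup

variable {Y Z : Type*} [NormedAddCommGroup Y] [NormedSpace ℂ Y]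
  [NormedAddCommGroup Z] [NormedSpace ℂ Z]

theorem IsC0Semigroup.comp_comm {T : ℝ → Y →L[ℂ] Y} (hT : IsC0Semigroup T) {t r : ℝ}
    (ht : 0 ≤ t) (hr : 0 ≤ r) : T t ∘L T r = T r ∘L T t := by
  rw [← hT.2.1 t r ht hr, ← hT.2.1 r t hr ht, add_comm]

theorem IsC0Semigroup.tendsto_diffQuot_apply {T : ℝ → Y →L[ℂ] Y} (hT : IsC0Semigroup T)
    {t : ℝ} (ht : 0 ≤ t) {y z : Y}
    (h : Tendsto (fun r : ℝ => r⁻¹ • (T r y - y)) (𝓝[>] 0) (𝓝 z)) :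
    Tendsto (fun r : ℝ => r⁻¹ • (T r (T t y) - T t y)) (𝓝[>] 0) (𝓝 (T t z)) := by
  refine (((T t).continuous.tendsto z).comp h).congr' ?_
  filter_upwards [self_mem_nhdsWithin] with r (hr : 0 < r)
  rw [Function.comp_apply, LinearMapClass.map_smul_of_tower, map_sub,
    ← ContinuousLinearMap.comp_apply, hT.comp_comm ht hr.le, ContinuousLinearMap.comp_apply]

theorem IsC0Semigroup.apply_extrapolated {X Xm : Type*} [NormedAddCommGroup X]
    [NormedAddCommGroup Xm] [NormedSpace ℂ Xm] {T : ℝ → X → X} {Tm : ℝ → Xm →L[ℂ] Xm}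
    {j Am : X → Xm} (hTm : IsC0Semigroup Tm) (hext : ∀ t, 0 ≤ t → ∀ x, Tm t (j x) = j (T t x))
    (hgen : ∀ x, Tendsto (fun t : ℝ => t⁻¹ • (Tm t (j x) - j x)) (𝓝[>] 0) (𝓝 (Am x)))
    {t : ℝ} (ht : 0 ≤ t) (x : X) : Tm t (Am x) = Am (T t x) := by
  refine tendsto_nhds_unique ?_ (hgen (T t x))
  simpa only [hext t ht] using hTm.tendsto_diffQuot_apply ht (hgen x)

theorem IsC0Semigroup.conj {T : ℝ → Y →L[ℂ] Y} (hT : IsC0Semigroup T) (e : Y ≃L[ℂ] Z) :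
    IsC0Semigroup fun t => e.conjContinuousAlgEquiv (T t) := by
  refine ⟨by simp only [hT.1, map_one], fun t r ht hr => ?_, fun z => ?_⟩
  · simp only [hT.2.1 t r ht hr]; exact map_mul _ _ _
  · exact e.continuous.comp_continuousOn (hT.2.2 (e.symm z))

theorem tendsto_diffQuot_conj_iff (T : ℝ → Y →L[ℂ] Y) (e : Y ≃L[ℂ] Z) (z w : Z) :
    Tendsto (fun t : ℝ => t⁻¹ • (e.conjContinuousAlgEquiv (T t) z - z)) (𝓝[>] 0) (𝓝 w) ↔
      Tendsto (fun t : ℝ => t⁻¹ • (T t (e.symm z) - e.symm z)) (𝓝[>] 0) (𝓝 (e.symm w)) := by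
  rw [e.symm.toHomeomorph.isInducing.tendsto_nhds_iff]
  congr! with t
  rw [Function.comp_apply, ContinuousLinearEquiv.coe_toHomeomorph,
    ContinuousLinearEquiv.conjContinuousAlgEquiv_apply_apply, LinearMapClass.map_smul_of_tower,
    map_sub, e.symm_apply_apply]

theorem IsGenerator.conj {T : ℝ → Y →L[ℂ] Y} {A : Y →ₗ.[ℂ] Y} (hA : IsGenerator T A)
    (e : Y ≃L[ℂ] Z) {B : Z →ₗ.[ℂ] Z}
    (hB : IsGenerator (fun t => e.conjContinuousAlgEquiv (T t)) B) :
    (∀ z, z ∈ B.domain ↔ e.symm z ∈ A.domain) ∧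
      ∀ z : B.domain, ∃ h : e.symm z ∈ A.domain, e.symm (B z) = A ⟨e.symm z, h⟩ := by
  have hdom (z : Z) : z ∈ B.domain ↔ e.symm z ∈ A.domain := by
    rw [hB.1, hA.1]
    refine ⟨fun ⟨w, hw⟩ => ⟨e.symm w, (tendsto_diffQuot_conj_iff T e z w).1 hw⟩,
      fun ⟨w, hw⟩ => ⟨e w, (tendsto_diffQuot_conj_iff T e z (e w)).2 (by simpa using hw)⟩⟩
  refine ⟨hdom, fun z => ⟨(hdom z).1 z.2, ?_⟩⟩
  exact tendsto_nhds_unique ((tendsto_diffQuot_conj_iff T e z _).1 (hB.2 z)) (hA.2 _)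

end Semigroup

section BoundedInverse

variable {X : Type*} [NormedAddCommGroup X] [NormedSpace ℂ X]

theorem IsBoundedInverse.exists_eq_apply_iff {A : X →ₗ.[ℂ] X} {B : X →L[ℂ] X}
    (hB : IsBoundedInverse A B) (x y : X) : (∃ h : x ∈ A.domain, y = A ⟨x, h⟩) ↔ x = B y := by
  obtain ⟨hBdom, hAB, hBA⟩ := hB
  constructor
  · rintro ⟨h, rfl⟩
    exact (hBA ⟨x, h⟩).symm
  · rintro rfl
    exact ⟨hBdom y, (hAB y).symm⟩

theorem IsBoundedInverse.exists_eq_apply_iff_extrapolated {A : X →ₗ.[ℂ] X} {B : X →L[ℂ] X}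
    (hB : IsBoundedInverse A B) {Xm : Type*} {Am j : X → Xm} (hAm : Function.Injective Am)
    (hAmB : ∀ x, Am (B x) = j x) (x y : X) :
    (∃ h : x ∈ A.domain, y = A ⟨x, h⟩) ↔ Am x = j y := by
  rw [hB.exists_eq_apply_iff, ← hAmB, hAm.eq_iff]

end BoundedInverse

theorem MeasureTheory.Lp.enorm_rpow_toReal_eq_lintegral {Ω E : Type*} [MeasurableSpace Ω]
    {μ : Measure Ω} [NormedAddCommGroup E] {p : ℝ≥0∞} (hp0 : p ≠ 0) (hp : p ≠ ∞) (g : Lp E p μ) :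
    ‖g‖ₑ ^ p.toReal = ∫⁻ s, ‖g s‖ₑ ^ p.toReal ∂μ := by
  rw [Lp.enorm_def, eLpNorm_eq_lintegral_rpow_enorm_toReal hp0 hp, ← ENNReal.rpow_mul,
    one_div_mul_cancel (ENNReal.toReal_pos hp0 hp).ne', ENNReal.rpow_one]

theorem MeasureTheory.Lp.ext_of_ae_injective {Ω E : Type*} [MeasurableSpace Ω] {μ : Measure Ω}
    [NormedAddCommGroup E] {p : ℝ≥0∞} {F : Ω → Type*} {Φ : ∀ s, E → F s}
    (hΦ : ∀ᵐ s ∂μ, Function.Injective (Φ s)) {ξ : ∀ s, F s} {g g' : Lp E p μ}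
    (hg : ∀ᵐ s ∂μ, ξ s = Φ s (g s)) (hg' : ∀ᵐ s ∂μ, ξ s = Φ s (g' s)) : g = g' := by
  refine Lp.ext ?_
  filter_upwards [hΦ, hg, hg'] with s hinj h h'
  exact hinj (h.symm.trans h')

theorem exists_linearIsometryEquiv_Lp_of_fiberwise {Ω : Type*} [MeasurableSpace Ω]
    {μ : Measure Ω} {X : Type*} [NormedAddCommGroup X] [NormedSpace ℂ X] {p : ℝ≥0∞}
    [Fact (1 ≤ p)] (hp : p ≠ ∞) {Xm : Ω → Type*} [∀ s, NormedAddCommGroup (Xm s)]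
    [∀ s, NormedSpace ℂ (Xm s)] {Mm : ∀ s, X →ₗ[ℂ] Xm s}
    (hMm : ∀ᵐ s ∂μ, ∀ x : X, ‖Mm s x‖ = ‖x‖)
    {𝒳 : Type*} [NormedAddCommGroup 𝒳] [NormedSpace ℂ 𝒳] {toFib : 𝒳 → ∀ s, Xm s}
    (htoFib_add : ∀ f g : 𝒳, ∀ᵐ s ∂μ, toFib (f + g) s = toFib f s + toFib g s)
    (htoFib_smul : ∀ (c : ℂ) (f : 𝒳), ∀ᵐ s ∂μ, toFib (c • f) s = c • toFib f s)
    (hmem : ∀ f : 𝒳, ∃ g : Lp X p μ, ∀ᵐ s ∂μ, toFib f s = Mm s (g s))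
    (hsurj : ∀ g : Lp X p μ, ∃ f : 𝒳, ∀ᵐ s ∂μ, toFib f s = Mm s (g s))
    (hnorm : ∀ f : 𝒳, ENNReal.ofReal (‖f‖ ^ p.toReal)
      = ∫⁻ s, ENNReal.ofReal (‖toFib f s‖ ^ p.toReal) ∂μ) :
    ∃ E : 𝒳 ≃ₗᵢ[ℂ] Lp X p μ, ∀ f, ∀ᵐ s ∂μ, toFib f s = Mm s (E f s) := by
  have hp0 : p ≠ 0 := (zero_lt_one.trans_le Fact.out).ne'
  have hpr : 0 < p.toReal := ENNReal.toReal_pos hp0 hp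
  have hinj : ∀ᵐ s ∂μ, Function.Injective (Mm s) :=
    hMm.mono fun s h => (AddMonoidHomClass.isometry_of_norm (Mm s) h).injective
  choose Ψ hΨ using hmem
  have hΨ_eq {f : 𝒳} {g : Lp X p μ} (h : ∀ᵐ s ∂μ, toFib f s = Mm s (g s)) : Ψ f = g :=
    Lp.ext_of_ae_injective hinj (hΨ f) h
  let L : 𝒳 →ₗ[ℂ] Lp X p μ :=
    { toFun := Ψ
      map_add' := fun f f' => hΨ_eq <| by
        filter_upwards [htoFib_add f f', hΨ f, hΨ f', Lp.coeFn_add (Ψ f) (Ψ f')]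
          with s h h₁ h₂ h₃
        rw [h, h₁, h₂, h₃, Pi.add_apply, map_add]
      map_smul' := fun c f => hΨ_eq (g := c • Ψ f) <| by
        filter_upwards [htoFib_smul c f, hΨ f, Lp.coeFn_smul c (Ψ f)] with s h h₁ h₂
        rw [h, h₁, h₂, Pi.smul_apply, map_smul] }
  have hΨ_norm (f : 𝒳) : ‖Ψ f‖ = ‖f‖ := by
    have h : ‖Ψ f‖ₑ ^ p.toReal = ‖f‖ₑ ^ p.toReal := by
      rw [Lp.enorm_rpow_toReal_eq_lintegral hp0 hp, ← ofReal_norm,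
        ENNReal.ofReal_rpow_of_nonneg (norm_nonneg _) hpr.le, hnorm]
      refine lintegral_congr_ae ?_
      filter_upwards [hΨ f, hMm] with s h₁ h₂
      rw [h₁, h₂, ← ENNReal.ofReal_rpow_of_nonneg (norm_nonneg _) hpr.le, ofReal_norm]
    simpa using congrArg ENNReal.toReal (ENNReal.rpow_left_injective hpr.ne' h)
  refine ⟨LinearIsometryEquiv.ofSurjective ⟨L, hΨ_norm⟩ fun g => ?_, hΨ⟩
  obtain ⟨f, hf⟩ := hsurj g
  exact ⟨f, hΨ_eq hf⟩

theorem extrapolated_multiplication_semigroup_general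
    {Ω : Type*} [MeasurableSpace Ω] {μ : Measure Ω}
    {X : Type*} [NormedAddCommGroup X] [NormedSpace ℂ X]
    {p : ℝ≥0∞} [Fact (1 ≤ p)] (hp : p ≠ ∞)
    -- the multiplication operator and the multiplication semigroup it generates
    (M : Ω → X →ₗ.[ℂ] X) (𝓜 : Lp X p μ →ₗ.[ℂ] Lp X p μ) (hMul : IsMulOp μ p M 𝓜)
    (𝒯 : ℝ → Lp X p μ →L[ℂ] Lp X p μ) (hT : IsC0Semigroup 𝒯) (hTgen : IsGenerator 𝒯 𝓜)
    -- the fiber semigroups, of the same type, generated by the fiber operators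
    (T : Ω → ℝ → X →L[ℂ] X)
    (hrep : ∀ t : ℝ, 0 ≤ t → ∀ f : Lp X p μ, ∀ᵐ s ∂μ, (𝒯 t f) s = T s t (f s))
    -- `0 ∈ ρ(M(s))` for a.e. `s`, with inverse `Minv s = M(s)⁻¹`
    (Minv : Ω → X →L[ℂ] X) (hinv : ∀ᵐ s ∂μ, IsBoundedInverse (M s) (Minv s))
    -- the extrapolated fiber spaces `X_{-1,s}` with embeddings `jmap s`
    (Xm : Ω → Type*) [∀ s, NormedAddCommGroup (Xm s)] [∀ s, NormedSpace ℂ (Xm s)]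
    (jmap : ∀ s, X →ₗ[ℂ] Xm s)
    -- the extrapolated fiber operators `M_{-1}(s)`, isometric isomorphisms `X → X_{-1,s}`
    (Mm : ∀ s, X →ₗ[ℂ] Xm s)
    (hMm : ∀ᵐ s ∂μ, (∀ x : X, Mm s (Minv s x) = jmap s x) ∧
      (∀ x : X, ‖Mm s x‖ = ‖x‖) ∧ Function.Surjective (Mm s))
    -- the extrapolated fiber semigroups `T_{-1,s}`, extending `T_s` and generated by `M_{-1}(s)`
    (Tm : ∀ s, ℝ → Xm s →L[ℂ] Xm s)
    (hTm : ∀ᵐ s ∂μ, IsC0Semigroup (Tm s) ∧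
      (∀ t : ℝ, 0 ≤ t → ∀ x : X, Tm s t (jmap s x) = jmap s (T s t x)) ∧
      (∀ x : X, Tendsto (fun t : ℝ => t⁻¹ • (Tm s t (jmap s x) - jmap s x))
        (nhdsWithin 0 (Set.Ioi 0)) (nhds (Mm s x))) ∧
      (∀ ξ : Xm s, (∃ z : Xm s, Tendsto (fun t : ℝ => t⁻¹ • (Tm s t ξ - ξ))
          (nhdsWithin 0 (Set.Ioi 0)) (nhds z)) → ∃ x : X, ξ = jmap s x))
    -- the space `𝒳`, presented by the fiberwise evaluation map `toFib`
    (𝒳 : Type*) [NormedAddCommGroup 𝒳] [NormedSpace ℂ 𝒳]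
    (toFib : 𝒳 → ∀ s, Xm s)
    (htoFib_add : ∀ f g : 𝒳, ∀ᵐ s ∂μ, toFib (f + g) s = toFib f s + toFib g s)
    (htoFib_smul : ∀ (c : ℂ) (f : 𝒳), ∀ᵐ s ∂μ, toFib (c • f) s = c • toFib f s)
    (hmem : ∀ f : 𝒳, ∃ g : Lp X p μ, ∀ᵐ s ∂μ, toFib f s = Mm s (g s))
    (hsurj : ∀ g : Lp X p μ, ∃ f : 𝒳, ∀ᵐ s ∂μ, toFib f s = Mm s (g s))
    (hnorm : ∀ f : 𝒳, ENNReal.ofReal (‖f‖ ^ p.toReal)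
      = ∫⁻ s, ENNReal.ofReal (‖toFib f s‖ ^ p.toReal) ∂μ) :
    ∃ S : ℝ → 𝒳 →L[ℂ] 𝒳,
      IsC0Semigroup S ∧
      -- `(S(t)f)(s) = T_{-1,s}(t) f(s)`
      (∀ t : ℝ, 0 ≤ t → ∀ f : 𝒳, ∀ᵐ s ∂μ, toFib (S t f) s = Tm s t (toFib f s)) ∧
      -- `S` extends `𝒯` along the canonical inclusion `L^p(Ω,X) ⊆ 𝒳`
      (∀ t : ℝ, 0 ≤ t → ∀ (g : Lp X p μ) (f : 𝒳),
        (∀ᵐ s ∂μ, toFib f s = jmap s (g s)) →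
        ∀ᵐ s ∂μ, toFib (S t f) s = jmap s ((𝒯 t g) s)) ∧
      -- the generator of `S` is `ℳ_{-1}`, with domain `L^p(Ω,X)` and fiberwise action `M_{-1}(s)`
      ∀ 𝒜 : 𝒳 →ₗ.[ℂ] 𝒳, IsGenerator S 𝒜 →
        (∀ f : 𝒳, f ∈ 𝒜.domain ↔ ∃ g : Lp X p μ, ∀ᵐ s ∂μ, toFib f s = jmap s (g s)) ∧
        ∀ (f : 𝒜.domain) (g : Lp X p μ), (∀ᵐ s ∂μ, toFib (f : 𝒳) s = jmap s (g s)) →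
          ∀ᵐ s ∂μ, toFib (𝒜 f) s = Mm s (g s) := by
  obtain ⟨E, hE⟩ := exists_linearIsometryEquiv_Lp_of_fiberwise hp (hMm.mono fun _ h => h.2.1)
    htoFib_add htoFib_smul hmem hsurj hnorm
  let e : Lp X p μ ≃L[ℂ] 𝒳 := E.toContinuousLinearEquiv.symm
  let S : ℝ → 𝒳 →L[ℂ] 𝒳 := fun t => e.conjContinuousAlgEquiv (𝒯 t)
  have hS (t : ℝ) (f : 𝒳) : E (S t f) = 𝒯 t (E f) := E.apply_symm_apply _
  have hSfib (t : ℝ) (ht : 0 ≤ t) (f : 𝒳) : ∀ᵐ s ∂μ, toFib (S t f) s = Tm s t (toFib f s) := by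
    filter_upwards [hE (S t f), hE f, hrep t ht (E f), hTm] with s h₁ h₂ h₃ ⟨hTs, hext, hgen, _⟩
    rw [h₁, h₂, hTs.apply_extrapolated hext hgen ht, hS, h₃]
  refine ⟨S, hT.conj e, hSfib, fun t ht g f hf => ?_, fun 𝒜 h𝒜 => ?_⟩
  · filter_upwards [hSfib t ht f, hf, hrep t ht g, hTm] with s h₁ h₂ h₃ h₄
    rw [h₁, h₂, h₄.2.1 t ht, h₃]
  obtain ⟨hdom, happly⟩ := hTgen.conj e h𝒜
  have hgraph (f : 𝒳) (g : Lp X p μ) :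
      (∀ᵐ s ∂μ, ∃ h : E f s ∈ (M s).domain, g s = M s ⟨E f s, h⟩) ↔
        ∀ᵐ s ∂μ, toFib f s = jmap s (g s) := by
    refine eventually_congr ?_
    filter_upwards [hE f, hinv, hMm] with s h₁ h₂ ⟨hMmB, hiso, _⟩
    rw [h₁, h₂.exists_eq_apply_iff_extrapolated
      (AddMonoidHomClass.isometry_of_norm (Mm s) hiso).injective hMmB]
  refine ⟨fun f => by simp_rw [hdom, hMul.1, ← hgraph]; rfl, fun f g hg => ?_⟩
  obtain ⟨hf, hAf⟩ := happly f
  filter_upwards [hE (𝒜 f), hMul.2 ⟨_, hf⟩, (hgraph f g).2 hg] with s h₁ ⟨_, h₂⟩ ⟨_, h₃⟩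
  rw [h₁, h₃]
  exact congrArg (Mm s) ((congrArg (fun φ : Lp X p μ => φ s) hAf).trans h₂)

/-- (Lemma 3.1) Let `𝓜` be a multiplication operator generating a
multiplication semigroup `(𝒯(t))` of type `(C,ω)` with fiber semigroups `(T_s(t))` of type
`(C,ω)` generated by the fiber operators `M(s)`, and let `0 ∈ ρ(M(s))` a.e.  Given the
extrapolated fibers `X_{-1,s}` (Banach spaces `Xm s` with dense embeddings `jmap s : X → Xm s`
satisfying `‖jmap s x‖ = ‖M(s)⁻¹ x‖`), the extrapolated operators `M_{-1}(s) = Mm s` and the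
extrapolated semigroups `(T_{-1,s}(t)) = Tm s`, and the space
`𝒳 = {f ∈ ∏ₛ X_{-1,s} : ∃ g ∈ L^p(Ω,X), f = M_{-1}(·)g(·)}` with
`‖f‖_𝒳 = (∫ ‖f(s)‖_{-1,s}^p dμ)^{1/p}` (presented by the evaluation map `toFib`), the formula
`(S(t)f)(s) = T_{-1,s}(t) f(s)` defines a `C₀`-semigroup on `𝒳` extending `(𝒯(t))`, whose
generator is `ℳ_{-1}` given by `(ℳ_{-1}f)(s) = M_{-1}(s) f(s)` with domain `L^p(Ω,X)`. -/
theorem extrapolated_multiplication_semigroup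
    {Ω : Type*} [MeasurableSpace Ω] {μ : Measure Ω} [SigmaFinite μ]
    {X : Type*} [NormedAddCommGroup X] [NormedSpace ℂ X] [CompleteSpace X]
    {p : ℝ≥0∞} [Fact (1 ≤ p)] (hp : p ≠ ∞)
    -- the multiplication operator and the multiplication semigroup it generates
    (M : Ω → X →ₗ.[ℂ] X) (𝓜 : Lp X p μ →ₗ.[ℂ] Lp X p μ) (hMul : IsMulOp μ p M 𝓜)
    (𝒯 : ℝ → Lp X p μ →L[ℂ] Lp X p μ) (hT : IsC0Semigroup 𝒯) (hTgen : IsGenerator 𝒯 𝓜)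
    (C ω : ℝ) (hC : 0 ≤ C) (htype : ∀ t : ℝ, 0 ≤ t → ‖𝒯 t‖ ≤ C * Real.exp (ω * t))
    -- the fiber semigroups, of the same type, generated by the fiber operators
    (T : Ω → ℝ → X →L[ℂ] X)
    (hfib : ∀ᵐ s ∂μ, IsC0Semigroup (T s) ∧ IsGenerator (T s) (M s) ∧
      ∀ t : ℝ, 0 ≤ t → ‖T s t‖ ≤ C * Real.exp (ω * t))
    (hrep : ∀ t : ℝ, 0 ≤ t → ∀ f : Lp X p μ, ∀ᵐ s ∂μ, (𝒯 t f) s = T s t (f s))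
    -- `0 ∈ ρ(M(s))` for a.e. `s`, with inverse `Minv s = M(s)⁻¹`
    (Minv : Ω → X →L[ℂ] X) (hinv : ∀ᵐ s ∂μ, IsBoundedInverse (M s) (Minv s))
    -- the extrapolated fiber spaces `X_{-1,s}` with embeddings `jmap s`
    (Xm : Ω → Type*) [∀ s, NormedAddCommGroup (Xm s)] [∀ s, NormedSpace ℂ (Xm s)]
    [∀ s, CompleteSpace (Xm s)]
    (jmap : ∀ s, X →ₗ[ℂ] Xm s)
    (hj : ∀ᵐ s ∂μ, (∀ x : X, ‖jmap s x‖ = ‖Minv s x‖) ∧ DenseRange (jmap s))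
    -- the extrapolated fiber operators `M_{-1}(s)`, isometric isomorphisms `X → X_{-1,s}`
    (Mm : ∀ s, X →ₗ[ℂ] Xm s)
    (hMm : ∀ᵐ s ∂μ, (∀ x : X, Mm s (Minv s x) = jmap s x) ∧
      (∀ x : X, ‖Mm s x‖ = ‖x‖) ∧ Function.Surjective (Mm s))
    -- the extrapolated fiber semigroups `T_{-1,s}`, extending `T_s` and generated by `M_{-1}(s)`
    (Tm : ∀ s, ℝ → Xm s →L[ℂ] Xm s)
    (hTm : ∀ᵐ s ∂μ, IsC0Semigroup (Tm s) ∧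
      (∀ t : ℝ, 0 ≤ t → ∀ x : X, Tm s t (jmap s x) = jmap s (T s t x)) ∧
      (∀ x : X, Tendsto (fun t : ℝ => t⁻¹ • (Tm s t (jmap s x) - jmap s x))
        (nhdsWithin 0 (Set.Ioi 0)) (nhds (Mm s x))) ∧
      (∀ ξ : Xm s, (∃ z : Xm s, Tendsto (fun t : ℝ => t⁻¹ • (Tm s t ξ - ξ))
          (nhdsWithin 0 (Set.Ioi 0)) (nhds z)) → ∃ x : X, ξ = jmap s x))
    -- the space `𝒳`, presented by the fiberwise evaluation map `toFib`
    (𝒳 : Type*) [NormedAddCommGroup 𝒳] [NormedSpace ℂ 𝒳] [CompleteSpace 𝒳]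
    (toFib : 𝒳 → ∀ s, Xm s)
    (htoFib_add : ∀ f g : 𝒳, ∀ᵐ s ∂μ, toFib (f + g) s = toFib f s + toFib g s)
    (htoFib_smul : ∀ (c : ℂ) (f : 𝒳), ∀ᵐ s ∂μ, toFib (c • f) s = c • toFib f s)
    (htoFib_inj : ∀ f g : 𝒳, (∀ᵐ s ∂μ, toFib f s = toFib g s) → f = g)
    (hmem : ∀ f : 𝒳, ∃ g : Lp X p μ, ∀ᵐ s ∂μ, toFib f s = Mm s (g s))
    (hsurj : ∀ g : Lp X p μ, ∃ f : 𝒳, ∀ᵐ s ∂μ, toFib f s = Mm s (g s))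
    (hnorm : ∀ f : 𝒳, ENNReal.ofReal (‖f‖ ^ p.toReal)
      = ∫⁻ s, ENNReal.ofReal (‖toFib f s‖ ^ p.toReal) ∂μ) :
    ∃ S : ℝ → 𝒳 →L[ℂ] 𝒳,
      IsC0Semigroup S ∧
      -- `(S(t)f)(s) = T_{-1,s}(t) f(s)`
      (∀ t : ℝ, 0 ≤ t → ∀ f : 𝒳, ∀ᵐ s ∂μ, toFib (S t f) s = Tm s t (toFib f s)) ∧
      -- `S` extends `𝒯` along the canonical inclusion `L^p(Ω,X) ⊆ 𝒳`
      (∀ t : ℝ, 0 ≤ t → ∀ (g : Lp X p μ) (f : 𝒳),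
        (∀ᵐ s ∂μ, toFib f s = jmap s (g s)) →
        ∀ᵐ s ∂μ, toFib (S t f) s = jmap s ((𝒯 t g) s)) ∧
      -- the generator of `S` is `ℳ_{-1}`, with domain `L^p(Ω,X)` and fiberwise action `M_{-1}(s)`
      ∀ 𝒜 : 𝒳 →ₗ.[ℂ] 𝒳, IsGenerator S 𝒜 →
        (∀ f : 𝒳, f ∈ 𝒜.domain ↔ ∃ g : Lp X p μ, ∀ᵐ s ∂μ, toFib f s = jmap s (g s)) ∧
        ∀ (f : 𝒜.domain) (g : Lp X p μ), (∀ᵐ s ∂μ, toFib (f : 𝒳) s = jmap s (g s)) →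
          ∀ᵐ s ∂μ, toFib (𝒜 f) s = Mm s (g s) :=
  extrapolated_multiplication_semigroup_general hp M 𝓜 hMul 𝒯 hT hTgen T hrep Minv hinv Xm jmap Mm
    hMm Tm hTm 𝒳 toFib htoFib_add htoFib_smul hmem hsurj hnorm
end
end

section
/- Let 1 ≤ p < ∞, let X be a separable complex Banach space with a countable dense (ℚ+iℚ)-subspace B, and let (ℳ, D(ℳ)) be the operator-valued multiplication operator on L^p(Ω,X) induced by a family (M(s), D(M(s)))_{s∈Ω} of linear operators on X such that: M(s) generates a C₀-semigroup on X for μ-almost every s; 0 ∈ ρ(M(s)) for μ-almost every s with s ↦ M(s)^{-1} in L^∞(Ω,L_s(X)) (so that 0 ∈ ρ(ℳ)); and s ↦ M(s)b and s ↦ M(s)^{-1}b are measurable for each b ∈ B. Let (X_{-1,s}, ‖·‖_{-1,s})_{s∈Ω} be the measurable Banach fiber bundle of extrapolation spaces (fibers being the completions of X with respect to ‖x‖_{-1,s} = ‖M(s)^{-1}x‖, with countable set B). Then the extrapolation space [L^p(Ω,X)]_{-1}(ℳ) equals the L^p-fiber space L^p(Ω,(X_{-1,s})_{s∈Ω}); precisely,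 the natural inclusion ι : L^p(Ω,X) → L^p(Ω,(X_{-1,s})_{s∈Ω}) (sending g to the function s ↦ g(s), with X embedded in X_{-1,s}) is well defined, satisfies ‖ι(g)‖_{L^p(Ω,(X_{-1,s}))} = ‖ℳ^{-1}g‖_{L^p(Ω,X)} for all g ∈ L^p(Ω,X), and has dense range, so that the completion of L^p(Ω,X) with respect to the norm f ↦ ‖ℳ^{-1}f‖_{L^p(Ω,X)} is isometrically isomorphic to L^p(Ω,(X_{-1,s})_{s∈Ω}) via the continuous extension of ι. -/
open MeasureTheory Filter
open scoped ENNReal NNReal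

noncomputable section

/-- A function `f` into the fibers of a measurable Banach fiber bundle is *fiber measurable*
(w.r.t. the countable generating family `b k`, the fiberwise images of the set `B`) if it is
`μ`-a.e. the pointwise limit of measurable simple functions with values in `B`. -/
def FiberMeasurable {Ω : Type*} [MeasurableSpace Ω] {Xf : Ω → Type*}
    [∀ s, NormedAddCommGroup (Xf s)]
    (μ : MeasureTheory.Measure Ω) (b : ℕ → ∀ s, Xf s) (f : ∀ s, Xf s) : Prop :=
  ∃ k : ℕ → Ω → ℕ, (∀ j, Measurable (k j) ∧ (Set.range (k j)).Finite) ∧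
    ∀ᵐ s ∂μ, Filter.Tendsto (fun j => b (k j s) s) Filter.atTop (nhds (f s))

/-- A fiber measurable function is *fiber `p`-integrable* if `∫ ‖f(s)‖_s^p dμ(s) < ∞`. -/
def FiberPIntegrable {Ω : Type*} [MeasurableSpace Ω] {Xf : Ω → Type*}
    [∀ s, NormedAddCommGroup (Xf s)]
    (μ : MeasureTheory.Measure Ω) (b : ℕ → ∀ s, Xf s) (p : ℝ) (f : ∀ s, Xf s) : Prop :=
  FiberMeasurable μ b f ∧ (∫⁻ s, ENNReal.ofReal (‖f s‖ ^ p) ∂μ) < ⊤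

/-- The countable family `b k` presents a measurable Banach fiber bundle `(X_s)_{s∈Ω}`:
the norms `s ↦ ‖b_k‖_s` are measurable, the family is fiberwise a `ℚ+iℚ`-vector space, and
fiberwise dense (the fiber `X_s` is the completion of `B/N_s`). -/
def IsFiberBasis {Ω : Type*} [MeasurableSpace Ω] {Xf : Ω → Type*}
    [∀ s, NormedAddCommGroup (Xf s)] [∀ s, NormedSpace ℂ (Xf s)]
    (b : ℕ → ∀ s, Xf s) : Prop :=
  (∀ k, Measurable fun s => ‖b k s‖) ∧
  (∃ k₀, ∀ s, b k₀ s = 0) ∧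
  (∀ k l, ∃ m, ∀ s, b m s = b k s + b l s) ∧
  (∀ (q r : ℚ) (k : ℕ), ∃ m, ∀ s, b m s = ((q : ℂ) + (r : ℂ) * Complex.I) • b k s) ∧
  ∀ s, DenseRange fun k => b k s

/-! The norm of `ι g` is computed fibrewise: `‖jmap s (g s)‖ = ‖M(s)⁻¹ g(s)‖ = ‖(ℳ⁻¹ g)(s)‖`,
which gives the isometry. For density, a fiber `p`-integrable `f` is the a.e. limit of
`B`-valued simple functions `bₙ`; cutting `bₙ` off where it is not within `‖f‖` of `f`, and
where `‖f‖ < 1/(n+1)`, yields elements of `L^p(Ω,X)` whose error is dominated by `‖f‖`, so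
dominated convergence applies. All fibrewise norms involved are measurable because
`s ↦ M(s)⁻¹ b` is for `b ∈ B`. -/

namespace MeasureTheory

variable {Ω : Type*} [MeasurableSpace Ω] {μ : Measure Ω}

theorem aestronglyMeasurable_apply_index {ι E : Type*} [Countable ι] [MeasurableSpace ι]
    [MeasurableSingletonClass ι] [TopologicalSpace E]
    [TopologicalSpace.PseudoMetrizableSpace E] {F : ι → Ω → E}
    (hF : ∀ i, AEStronglyMeasurable (F i) μ) {κ : Ω → ι} (hκ : Measurable κ) :
    AEStronglyMeasurable (fun s => F (κ s) s) μ := by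
  have hcover : (⋃ i, κ ⁻¹' {i}) = Set.univ := by
    rw [← Set.preimage_iUnion, Set.iUnion_of_singleton, Set.preimage_univ]
  rw [← Measure.restrict_univ (μ := μ), ← hcover, aestronglyMeasurable_iUnion_iff]
  intro i
  refine (hF i).restrict.congr ?_
  filter_upwards [ae_restrict_mem (hκ (measurableSet_singleton i))] with s hs
  rw [hs]

theorem lintegral_ofReal_norm_rpow_eq_eLpNorm_rpow {E : Type*} [NormedAddCommGroup E]
    {p : ℝ≥0∞} (hp0 : p ≠ 0) (hp : p ≠ ∞) (f : Ω → E) :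
    ∫⁻ s, ENNReal.ofReal (‖f s‖ ^ p.toReal) ∂μ = eLpNorm f p μ ^ p.toReal := by
  have hpt : 0 < p.toReal := ENNReal.toReal_pos hp0 hp
  simp_rw [← ENNReal.ofReal_rpow_of_nonneg (norm_nonneg _) hpt.le, ofReal_norm]
  rw [lintegral_rpow_enorm_eq_rpow_eLpNorm' hpt, eLpNorm_eq_eLpNorm' hp0 hp]

theorem measure_setOf_le_lt_top_of_lintegral_rpow {u : Ω → ℝ} (hu : AEMeasurable u μ)
    {q : ℝ} (hq : 0 < q) (hint : ∫⁻ s, ENNReal.ofReal (u s ^ q) ∂μ ≠ ∞) {δ : ℝ} (hδ : 0 < δ) :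
    μ {s | δ ≤ u s} < ∞ := by
  have hδq : ENNReal.ofReal (δ ^ q) ≠ 0 := by positivity
  calc μ {s | δ ≤ u s} ≤ μ {s | ENNReal.ofReal (δ ^ q) ≤ ENNReal.ofReal (u s ^ q)} := by
        refine measure_mono fun s (hs : δ ≤ u s) => ?_
        exact ENNReal.ofReal_le_ofReal (Real.rpow_le_rpow hδ.le hs hq.le)
    _ ≤ (∫⁻ s, ENNReal.ofReal (u s ^ q) ∂μ) / ENNReal.ofReal (δ ^ q) :=
        meas_ge_le_lintegral_div (by fun_prop) hδq ENNReal.ofReal_ne_top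
    _ < ∞ := ENNReal.div_lt_top hint hδq

theorem memLp_indicator_of_norm_le {E : Type*} [NormedAddCommGroup E] {p : ℝ≥0∞}
    {g : Ω → E} (hg : AEStronglyMeasurable g μ) {C : ℝ} (hC : ∀ s, ‖g s‖ ≤ C)
    {A : Set Ω} (hA : NullMeasurableSet A μ) (hμA : μ A ≠ ∞) : MemLp (A.indicator g) p μ := by
  refine (memLp_indicator_const p (measurableSet_toMeasurable μ A) C
    (Or.inr (by rwa [measure_toMeasurable]))).of_le (hg.indicator₀ hA) (ae_of_all _ fun s => ?_)
  by_cases hs : s ∈ A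
  · rw [Set.indicator_of_mem hs, Set.indicator_of_mem (subset_toMeasurable μ A hs)]
    exact (hC s).trans (Real.le_norm_self C)
  · simp [Set.indicator_of_notMem hs]

theorem tendsto_lintegral_ofReal_rpow_of_le {u : ℕ → Ω → ℝ} {v : Ω → ℝ} {q : ℝ} (hq : 0 < q)
    (hu : ∀ n, AEMeasurable (u n) μ)
    (hu0 : ∀ n s, 0 ≤ u n s) (huv : ∀ n s, u n s ≤ v s)
    (hv : ∫⁻ s, ENNReal.ofReal (v s ^ q) ∂μ ≠ ∞)
    (hlim : ∀ᵐ s ∂μ, Tendsto (fun n => u n s) atTop (nhds 0)) :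
    Tendsto (fun n => ∫⁻ s, ENNReal.ofReal (u n s ^ q) ∂μ) atTop (nhds 0) := by
  have hcont : Tendsto (fun x : ℝ => ENNReal.ofReal (x ^ q)) (nhds 0) (nhds 0) :=
    (ENNReal.continuous_ofReal.comp (Real.continuous_rpow_const hq.le)).tendsto' 0 0
      (by simp [hq.ne'])
  simpa using tendsto_lintegral_of_dominated_convergence' (f := fun _ => 0) _
    (fun n => ((hu n).pow_const q).ennreal_ofReal)
    (fun n => ae_of_all _ fun s =>
      ENNReal.ofReal_le_ofReal (Real.rpow_le_rpow (hu0 n s) (huv n s) hq.le))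
    hv (hlim.mono fun s hs => hcont.comp hs)

end MeasureTheory

theorem tendsto_ite_le_of_tendsto_zero {e : ℕ → ℝ} (he : Tendsto e atTop (nhds 0)) {v : ℝ}
    (hv : 0 ≤ v) :
    Tendsto (fun n : ℕ => if 1 / ((n : ℝ) + 1) ≤ v ∧ e n ≤ v then e n else v) atTop
      (nhds 0) := by
  rcases hv.eq_or_lt with rfl | hv
  · refine tendsto_const_nhds.congr fun n => ?_
    rw [if_neg fun h => (Nat.one_div_pos_of_nat (α := ℝ)).not_ge h.1]
  · refine he.congr' ?_
    filter_upwards [tendsto_one_div_add_atTop_nhds_zero_nat.eventually (eventually_le_nhds hv),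
      he.eventually (eventually_le_nhds hv)] with n h1 h2
    rw [if_pos ⟨h1, h2⟩]

section FiberMeasurability

variable {Ω : Type*} [MeasurableSpace Ω] {μ : Measure Ω}

theorem fiberMeasurable_of_aestronglyMeasurable {X : Type*} [NormedAddCommGroup X]
    {b : ℕ → X} (hb : DenseRange b) {g : Ω → X} (hg : AEStronglyMeasurable g μ) :
    FiberMeasurable (Xf := fun _ => X) μ (fun k _ => b k) g := by
  borelize X
  have : Countable (Set.range b) := (Set.countable_range b).to_subtype
  let φ := SimpleFunc.approxOn (hg.mk g) hg.stronglyMeasurable_mk.measurable (Set.range b) (b 0)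
    ⟨0, rfl⟩
  refine ⟨fun j => (φ j).map (Function.invFun b),
    fun j => ⟨((φ j).map _).measurable, ((φ j).map _).finite_range⟩, ?_⟩
  filter_upwards [hg.ae_eq_mk] with s hs
  have hφb (j : ℕ) : b (Function.invFun b (φ j s)) = φ j s :=
    Function.invFun_eq (SimpleFunc.approxOn_mem (s := Set.range b) _ _ j s)
  simp only [SimpleFunc.coe_map, Function.comp_apply, hφb, hs]
  exact SimpleFunc.tendsto_approxOn _ _ (hb _)

theorem FiberMeasurable.map {Xf Yf : Ω → Type*} [∀ s, NormedAddCommGroup (Xf s)]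
    [∀ s, NormedAddCommGroup (Yf s)] {b : ℕ → ∀ s, Xf s} {f : ∀ s, Xf s}
    (hf : FiberMeasurable μ b f) {T : ∀ s, Xf s → Yf s} (hT : ∀ᵐ s ∂μ, Continuous (T s)) :
    FiberMeasurable μ (fun k s => T s (b k s)) (fun s => T s (f s)) := by
  obtain ⟨k, hk, hconv⟩ := hf
  refine ⟨k, hk, ?_⟩
  filter_upwards [hT, hconv] with s hTs hs
  exact (hTs.tendsto _).comp hs

end FiberMeasurability

section ExtrapolatedFibers

variable {Ω : Type*} [MeasurableSpace Ω] {μ : Measure Ω}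
  {𝕜 : Type*} [NontriviallyNormedField 𝕜] {X Y : Type*} [NormedAddCommGroup X] [NormedSpace 𝕜 X]
  [NormedAddCommGroup Y] [NormedSpace 𝕜 Y]
  {Xm : Ω → Type*} [∀ s, NormedAddCommGroup (Xm s)] [∀ s, NormedSpace 𝕜 (Xm s)]
  {jmap : ∀ s, X →ₗ[𝕜] Xm s} {Minv : Ω → X →L[𝕜] Y} {b : ℕ → X}

theorem fiberMeasurable_apply_of_norm_eq (hj : ∀ᵐ s ∂μ, ∀ x, ‖jmap s x‖ = ‖Minv s x‖)
    (hb : DenseRange b) {g : Ω → X} (hg : AEStronglyMeasurable g μ) :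
    FiberMeasurable μ (fun k s => jmap s (b k)) (fun s => jmap s (g s)) :=
  (fiberMeasurable_of_aestronglyMeasurable hb hg).map <| hj.mono fun s hs =>
    AddMonoidHomClass.continuous_of_bound (jmap s) ‖Minv s‖ fun x =>
      (hs x).trans_le ((Minv s).le_opNorm x)

theorem FiberMeasurable.aemeasurable_norm_sub_apply
    (hj : ∀ᵐ s ∂μ, ∀ x, ‖jmap s x‖ = ‖Minv s x‖)
    (hb : ∀ m, AEStronglyMeasurable (fun s => Minv s (b m)) μ) {f : ∀ s, Xm s}
    (hf : FiberMeasurable μ (fun k s => jmap s (b k)) f) {ψ : Ω → X}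
    (hψ : AEStronglyMeasurable (fun s => Minv s (ψ s)) μ) :
    AEMeasurable (fun s => ‖f s - jmap s (ψ s)‖) μ := by
  obtain ⟨k, hk, hconv⟩ := hf
  refine aemeasurable_of_tendsto_metrizable_ae atTop
    (f := fun j s => ‖Minv s (b (k j s)) - Minv s (ψ s)‖)
    (fun j => ((aestronglyMeasurable_apply_index hb (hk j).1).sub hψ).norm.aemeasurable) ?_
  filter_upwards [hj, hconv] with s hs hlim
  refine ((hlim.sub tendsto_const_nhds).norm).congr fun j => ?_
  rw [← map_sub, hs, map_sub]

theorem FiberPIntegrable.exists_memLp_tendsto_lintegral_sub {p : ℝ≥0∞} (hp0 : p ≠ 0)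
    (hp : p ≠ ∞) (hj : ∀ᵐ s ∂μ, ∀ x, ‖jmap s x‖ = ‖Minv s x‖)
    (hb : ∀ m, AEStronglyMeasurable (fun s => Minv s (b m)) μ) {f : ∀ s, Xm s}
    (hf : FiberPIntegrable μ (fun k s => jmap s (b k)) p.toReal f) :
    ∃ φ : ℕ → Ω → X, (∀ n, MemLp (φ n) p μ) ∧
      Tendsto (fun n => ∫⁻ s, ENNReal.ofReal (‖f s - jmap s (φ n s)‖ ^ p.toReal) ∂μ) atTop
        (nhds 0) := by
  obtain ⟨hfm, hint⟩ := hf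
  obtain ⟨k, hk, hconv⟩ := id hfm
  have hpt : 0 < p.toReal := ENNReal.toReal_pos hp0 hp
  set e : ℕ → Ω → ℝ := fun n s => ‖f s - jmap s (b (k n s))‖
  have hMk (n : ℕ) : AEStronglyMeasurable (fun s => Minv s (b (k n s))) μ :=
    aestronglyMeasurable_apply_index hb (hk n).1
  have hv : AEMeasurable (fun s => ‖f s‖) μ := by
    simpa using hfm.aemeasurable_norm_sub_apply hj hb (ψ := 0)
      (by simpa using aestronglyMeasurable_const)
  set A : ℕ → Set Ω := fun n => {s | 1 / ((n : ℝ) + 1) ≤ ‖f s‖ ∧ e n s ≤ ‖f s‖}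
  set φ : ℕ → Ω → X := fun n => (A n).indicator fun s => b (k n s)
  have hA (n : ℕ) : NullMeasurableSet (A n) μ :=
    (nullMeasurableSet_le aemeasurable_const hv).inter
      (nullMeasurableSet_le (hfm.aemeasurable_norm_sub_apply hj hb (hMk n)) hv)
  have hμA (n : ℕ) : μ (A n) ≠ ∞ :=
    ((measure_mono fun s hs => hs.1).trans_lt
      (measure_setOf_le_lt_top_of_lintegral_rpow hv hpt hint.ne Nat.one_div_pos_of_nat)).ne
  have hφ (n : ℕ) : MemLp (φ n) p μ := by
    obtain ⟨C, hC⟩ := ((hk n).2.image fun m => ‖b m‖).bddAbove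
    exact memLp_indicator_of_norm_le
      (aestronglyMeasurable_apply_index (fun _ => aestronglyMeasurable_const) (hk n).1)
      (fun s => hC ⟨k n s, ⟨s, rfl⟩, rfl⟩) (hA n) (hμA n)
  have hMφ (n : ℕ) : AEStronglyMeasurable (fun s => Minv s (φ n s)) μ := by
    have : (fun s => Minv s (φ n s)) = (A n).indicator fun s => Minv s (b (k n s)) := by
      funext s
      by_cases hs : s ∈ A n <;> simp [φ, hs]
    exact this ▸ (hMk n).indicator₀ (hA n)
  have herr (n : ℕ) (s : Ω) : ‖f s - jmap s (φ n s)‖ =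
      if 1 / ((n : ℝ) + 1) ≤ ‖f s‖ ∧ e n s ≤ ‖f s‖ then e n s else ‖f s‖ := by
    simp only [φ, A, Set.indicator_apply, Set.mem_ofPred_eq]
    split_ifs <;> simp [e]
  refine ⟨φ, hφ, tendsto_lintegral_ofReal_rpow_of_le hpt
    (fun n => hfm.aemeasurable_norm_sub_apply hj hb (hMφ n)) (fun _ _ => norm_nonneg _)
    (fun n s => ?_) hint.ne (hconv.mono fun s hs => ?_)⟩
  · rw [herr]
    split_ifs with h
    exacts [h.2, le_rfl]
  · simp_rw [herr]
    refine tendsto_ite_le_of_tendsto_zero ?_ (norm_nonneg _)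
    simpa [e, norm_sub_rev] using tendsto_iff_norm_sub_tendsto_zero.1 hs

end ExtrapolatedFibers

attribute [local instance] Classical.propDecidable

theorem extrapolation_space_eq_lp_fiber_space_general
    {Ω : Type*} [MeasurableSpace Ω] {μ : Measure Ω}
    {X : Type*} [NormedAddCommGroup X] [NormedSpace ℂ X]
    {p : ℝ≥0∞} [Fact (1 ≤ p)] (hp : p ≠ ∞)
    -- the countable dense `ℚ+iℚ`-subspace `B = {bB k : k ∈ ℕ}` of `X`
    (bB : ℕ → X) (hBd : DenseRange bB)
    (Minv : Ω → X →L[ℂ] X)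
    -- measurability of `s ↦ M(s)b` and `s ↦ M(s)⁻¹b` for `b ∈ B`
    (hMinvmeas : ∀ k, AEStronglyMeasurable (fun s => Minv s (bB k)) μ)
    -- the induced multiplication operator `ℳ`, with `0 ∈ ρ(ℳ)` and `ℳ⁻¹ = Rinv = M(·)⁻¹`
    (Rinv : Lp X p μ →L[ℂ] Lp X p μ)
    (hRrep : ∀ f : Lp X p μ, ∀ᵐ s ∂μ, (Rinv f) s = Minv s (f s))
    -- the measurable Banach fiber bundle of extrapolated fibers `X_{-1,s}`
    (Xm : Ω → Type*) [∀ s, NormedAddCommGroup (Xm s)] [∀ s, NormedSpace ℂ (Xm s)]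
    (jmap : ∀ s, X →ₗ[ℂ] Xm s)
    (hj : ∀ᵐ s ∂μ, (∀ x : X, ‖jmap s x‖ = ‖Minv s x‖) ∧ DenseRange (jmap s)) :
    -- `ι` is well defined: `ι(g)` lies in the `L^p`-fiber space …
    (∀ g : Lp X p μ,
      FiberPIntegrable μ (fun k s => jmap s (bB k)) p.toReal (fun s => jmap s (g s))) ∧
    -- … it is isometric for the extrapolation norm: `‖ι(g)‖ = ‖ℳ⁻¹g‖_{L^p(Ω,X)}` …
    (∀ g : Lp X p μ,
      (∫⁻ s, ENNReal.ofReal (‖jmap s (g s)‖ ^ p.toReal) ∂μ) ^ (1 / p.toReal)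
        = eLpNorm (⇑(Rinv g)) p μ) ∧
    -- … and it has dense range in `L^p(Ω,(X_{-1,s})_{s∈Ω})`
    ∀ f : ∀ s, Xm s, FiberPIntegrable μ (fun k s => jmap s (bB k)) p.toReal f →
      ∀ ε : ℝ, 0 < ε → ∃ g : Lp X p μ,
        (∫⁻ s, ENNReal.ofReal (‖f s - jmap s (g s)‖ ^ p.toReal) ∂μ)
          < ENNReal.ofReal (ε ^ p.toReal) := by
  have hp0 : p ≠ 0 := (zero_lt_one.trans_le (Fact.out : (1 : ℝ≥0∞) ≤ p)).ne'
  have hpt : 0 < p.toReal := ENNReal.toReal_pos hp0 hp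
  have hjM : ∀ᵐ s ∂μ, ∀ x, ‖jmap s x‖ = ‖Minv s x‖ := hj.mono fun s hs => hs.1
  have hnorm (g : Lp X p μ) : ∫⁻ s, ENNReal.ofReal (‖jmap s (g s)‖ ^ p.toReal) ∂μ
      = eLpNorm (⇑(Rinv g)) p μ ^ p.toReal := by
    rw [← lintegral_ofReal_norm_rpow_eq_eLpNorm_rpow hp0 hp]
    refine lintegral_congr_ae ?_
    filter_upwards [hjM, hRrep g] with s hs hr
    rw [hs, hr]
  refine ⟨fun g => ⟨fiberMeasurable_apply_of_norm_eq hjM hBd (Lp.aestronglyMeasurable g), ?_⟩,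
    fun g => ?_, fun f hf ε hε => ?_⟩
  · rw [hnorm]
    exact ENNReal.rpow_lt_top_of_nonneg hpt.le (Lp.eLpNorm_ne_top _)
  · rw [hnorm, ← ENNReal.rpow_mul, mul_one_div_cancel hpt.ne', ENNReal.rpow_one]
  · obtain ⟨φ, hφ, hlim⟩ := hf.exists_memLp_tendsto_lintegral_sub hp0 hp hjM hMinvmeas
    obtain ⟨n, hn⟩ := (hlim.eventually_lt_const
      (ENNReal.ofReal_pos.2 (Real.rpow_pos_of_pos hε _))).exists
    refine ⟨(hφ n).toLp, ?_⟩
    rwa [lintegral_congr_ae ((hφ n).coeFn_toLp.mono fun s hs => by rw [hs])]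

/-- (Theorem 3.3) The extrapolation space `[L^p(Ω,X)]_{-1}(ℳ)` of the Bochner
space `L^p(Ω,X)` with respect to the operator-valued multiplication operator `ℳ` equals the
`L^p`-fiber space `L^p(Ω,(X_{-1,s})_{s∈Ω})`: the natural inclusion
`ι : L^p(Ω,X) → L^p(Ω,(X_{-1,s})_{s∈Ω})`, `g ↦ (s ↦ g(s))` (with `X ⊆ X_{-1,s}` via `jmap s`)
is well defined, satisfies `‖ι(g)‖ = ‖ℳ⁻¹g‖_{L^p(Ω,X)}`, and has dense range; hence the
completion of `L^p(Ω,X)` with respect to `f ↦ ‖ℳ⁻¹f‖` is isometrically isomorphic to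
`L^p(Ω,(X_{-1,s})_{s∈Ω})` via the continuous extension of `ι`. -/
theorem extrapolation_space_eq_lp_fiber_space
    {Ω : Type*} [MeasurableSpace Ω] {μ : Measure Ω} [SigmaFinite μ]
    {X : Type*} [NormedAddCommGroup X] [NormedSpace ℂ X] [CompleteSpace X]
    [TopologicalSpace.SeparableSpace X]
    {p : ℝ≥0∞} [Fact (1 ≤ p)] (hp : p ≠ ∞)
    -- the countable dense `ℚ+iℚ`-subspace `B = {bB k : k ∈ ℕ}` of `X`
    (bB : ℕ → X) (hBd : DenseRange bB)
    (hB0 : ∃ k₀, bB k₀ = 0)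
    (hBadd : ∀ k l, ∃ m, bB m = bB k + bB l)
    (hBsmul : ∀ (q r : ℚ) (k : ℕ), ∃ m, bB m = ((q : ℂ) + (r : ℂ) * Complex.I) • bB k)
    -- the fiber operators: a.e. generators of `C₀`-semigroups with `0 ∈ ρ(M(s))`
    (M : Ω → X →ₗ.[ℂ] X)
    (hgen : ∀ᵐ s ∂μ, ∃ T : ℝ → X →L[ℂ] X, IsC0Semigroup T ∧ IsGenerator T (M s))
    (Minv : Ω → X →L[ℂ] X) (hinv : ∀ᵐ s ∂μ, IsBoundedInverse (M s) (Minv s))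
    -- `s ↦ M(s)⁻¹` belongs to `L^∞(Ω,L_s(X))`
    (hLinf : ∀ x : X, MemLp (fun s => Minv s x) ∞ μ)
    -- measurability of `s ↦ M(s)b` and `s ↦ M(s)⁻¹b` for `b ∈ B`
    (hMinvmeas : ∀ k, AEStronglyMeasurable (fun s => Minv s (bB k)) μ)
    (hMmeas : ∀ k, AEStronglyMeasurable
      (fun s => if h : bB k ∈ (M s).domain then M s ⟨bB k, h⟩ else 0) μ)
    -- the induced multiplication operator `ℳ`, with `0 ∈ ρ(ℳ)` and `ℳ⁻¹ = Rinv = M(·)⁻¹`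
    (𝓜 : Lp X p μ →ₗ.[ℂ] Lp X p μ) (hMul : IsMulOp μ p M 𝓜)
    (Rinv : Lp X p μ →L[ℂ] Lp X p μ) (hRinv : IsBoundedInverse 𝓜 Rinv)
    (hRrep : ∀ f : Lp X p μ, ∀ᵐ s ∂μ, (Rinv f) s = Minv s (f s))
    -- the measurable Banach fiber bundle of extrapolated fibers `X_{-1,s}`
    (Xm : Ω → Type*) [∀ s, NormedAddCommGroup (Xm s)] [∀ s, NormedSpace ℂ (Xm s)]
    [∀ s, CompleteSpace (Xm s)]
    (jmap : ∀ s, X →ₗ[ℂ] Xm s)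
    (hj : ∀ᵐ s ∂μ, (∀ x : X, ‖jmap s x‖ = ‖Minv s x‖) ∧ DenseRange (jmap s)) :
    -- `ι` is well defined: `ι(g)` lies in the `L^p`-fiber space …
    (∀ g : Lp X p μ,
      FiberPIntegrable μ (fun k s => jmap s (bB k)) p.toReal (fun s => jmap s (g s))) ∧
    -- … it is isometric for the extrapolation norm: `‖ι(g)‖ = ‖ℳ⁻¹g‖_{L^p(Ω,X)}` …
    (∀ g : Lp X p μ,
      (∫⁻ s, ENNReal.ofReal (‖jmap s (g s)‖ ^ p.toReal) ∂μ) ^ (1 / p.toReal)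
        = eLpNorm (⇑(Rinv g)) p μ) ∧
    -- … and it has dense range in `L^p(Ω,(X_{-1,s})_{s∈Ω})`
    ∀ f : ∀ s, Xm s, FiberPIntegrable μ (fun k s => jmap s (bB k)) p.toReal f →
      ∀ ε : ℝ, 0 < ε → ∃ g : Lp X p μ,
        (∫⁻ s, ENNReal.ofReal (‖f s - jmap s (g s)‖ ^ p.toReal) ∂μ)
          < ENNReal.ofReal (ε ^ p.toReal) :=
  extrapolation_space_eq_lp_fiber_space_general hp bB hBd Minv hMinvmeas Rinv hRrep Xm jmap hj
end
end

section
/- Let X be a separable complex Banach space, let (A, D(A)) be the generator of a C₀-semigroup on X with 0 ∈ ρ(A), and let X_{-1}^A be the extrapolation space of X with respect to A, i.e., the completion of X under ‖x‖_{-1} := ‖A^{-1}x‖. Define the operator (ℳ, D(ℳ)) on L^p(Ω,X) by (ℳf)(s) := A f(s) with D(ℳ) := L^p(Ω,D(A)) = {f ∈ L^p(Ω,X) : f(s) ∈ D(A) μ-a.e. and s ↦ A f(s) ∈ L^p(Ω,X)}. Then (L^p(Ω,X))_{-1}(ℳ) = L^p(Ω, X_{-1}^A); precisely, the natural inclusion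 ι : L^p(Ω,X) → L^p(Ω, X_{-1}^A) satisfies ‖ι(g)‖_{L^p(Ω,X_{-1}^A)} = ‖ℳ^{-1}g‖_{L^p(Ω,X)} for all g ∈ L^p(Ω,X) and has dense range, so the completion of L^p(Ω,X) with respect to f ↦ ‖ℳ^{-1}f‖_{L^p(Ω,X)} is isometrically isomorphic to the Bochner space L^p(Ω, X_{-1}^A) via the continuous extension of ι. -/
/-!
The isometry is pointwise: `‖j x‖ = ‖A⁻¹ x‖` and `ℳ⁻¹` acts as `A⁻¹` fiberwise. For density,
`Lᵖ(Ω, X₋₁)` with `p < ∞` is the closed span of the indicators `c • 1ₛ`, and `j (x • 1ₛ) = (j x) • 1ₛ`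
approximates `c • 1ₛ` as `j x` approximates `c`.
-/

open MeasureTheory Filter
open scoped ENNReal NNReal

noncomputable section

section

variable {α : Type*} [MeasurableSpace α] {μ : Measure α} {p : ℝ≥0∞} [Fact (1 ≤ p)]
  {𝕜 : Type*} [NontriviallyNormedField 𝕜]
  {E : Type*} [NormedAddCommGroup E] [NormedSpace 𝕜 E]
  {F : Type*} [NormedAddCommGroup F] [NormedSpace 𝕜 F]

theorem MeasureTheory.lipschitzWith_indicatorConstLp {s : Set α} (hs : MeasurableSet s) (hμs : μ s ≠ ∞) :
    LipschitzWith ((μ s).toNNReal ^ (1 / p.toReal))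
      (indicatorConstLp p hs hμs : E → Lp E p μ) :=
  LipschitzWith.of_dist_le_mul fun c c' => by
    rw [dist_eq_norm, dist_eq_norm, indicatorConstLp_sub, mul_comm, NNReal.coe_rpow]
    exact norm_indicatorConstLp_le

theorem ContinuousLinearMap.compLpL_indicatorConstLp (L : E →L[𝕜] F) {s : Set α}
    (hs : MeasurableSet s) (hμs : μ s ≠ ∞) (c : E) :
    L.compLpL p μ (indicatorConstLp p hs hμs c) = indicatorConstLp p hs hμs (L c) := by
  refine Lp.ext ?_
  filter_upwards [L.coeFn_compLpL (indicatorConstLp p hs hμs c),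
    indicatorConstLp_coeFn (p := p) (hs := hs) (hμs := hμs) (c := c),
    indicatorConstLp_coeFn (p := p) (hs := hs) (hμs := hμs) (c := L c)] with a hL hc hLc
  rw [hL, hc, hLc]
  by_cases ha : a ∈ s <;> simp [ha]

theorem ContinuousLinearMap.denseRange_compLpL (hp : p ≠ ∞) {L : E →L[𝕜] F}
    (hL : DenseRange L) : DenseRange (L.compLpL p μ) := by
  let R : Submodule 𝕜 (Lp F p μ) := LinearMap.range (L.compLpL p μ : Lp E p μ →ₗ[𝕜] Lp F p μ)
  suffices ∀ f : Lp F p μ, f ∈ R.topologicalClosure from this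
  refine Lp.induction hp _ (fun c s hs hμs => ?_)
    (fun _ _ _ _ _ hf hg => R.topologicalClosure.add_mem hf hg) R.isClosed_topologicalClosure
  rw [Lp.simpleFunc.coe_indicatorConst, ← SetLike.mem_coe, Submodule.topologicalClosure_coe]
  refine closure_mono ?_ <|
    mem_closure_image (lipschitzWith_indicatorConstLp hs hμs.ne).continuous.continuousAt (hL c)
  rintro _ ⟨_, ⟨x, rfl⟩, rfl⟩
  exact ⟨indicatorConstLp p hs hμs.ne x, L.compLpL_indicatorConstLp hs hμs.ne x⟩

theorem ContinuousLinearMap.edist_compLpL (L : E →L[𝕜] F) (f : Lp F p μ) (g : Lp E p μ) :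
    edist f (L.compLpL p μ g) = eLpNorm (fun a => f a - L (g a)) p μ := by
  rw [Lp.edist_def]
  refine eLpNorm_congr_ae ?_
  filter_upwards [L.coeFn_compLpL g] with a ha
  rw [Pi.sub_apply, ha]

end

theorem constant_fiber_extrapolation_space_eq_bochner_space_general
    {Ω : Type*} [MeasurableSpace Ω] {μ : Measure Ω}
    {X : Type*} [NormedAddCommGroup X] [NormedSpace ℂ X]
    {p : ℝ≥0∞} [Fact (1 ≤ p)] (hp : p ≠ ∞)
    -- `A` generates a `C₀`-semigroup on `X` and `0 ∈ ρ(A)`, with inverse `Ainv = A⁻¹`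
    (Ainv : X →L[ℂ] X)
    -- the extrapolation space `X_{-1}^A`: completion of `X` w.r.t. `‖x‖_{-1} = ‖A⁻¹x‖`
    (Xm1 : Type*) [NormedAddCommGroup Xm1] [NormedSpace ℂ Xm1]
    (j : X →L[ℂ] Xm1) (hjiso : ∀ x : X, ‖j x‖ = ‖Ainv x‖) (hjdense : DenseRange j)
    -- the constant-fiber multiplication operator `ℳ`, with `ℳ⁻¹ = Rinv` acting as `A⁻¹` fiberwise
    (Rinv : Lp X p μ →L[ℂ] Lp X p μ)
    (hRrep : ∀ f : Lp X p μ, ∀ᵐ s ∂μ, (Rinv f) s = Ainv (f s)) :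
    -- `ι` is well defined into the Bochner space `L^p(Ω,X_{-1}^A)` …
    (∀ g : Lp X p μ, MemLp (fun s => j (g s)) p μ) ∧
    -- … it is isometric for the extrapolation norm: `‖ι(g)‖ = ‖ℳ⁻¹g‖_{L^p(Ω,X)}` …
    (∀ g : Lp X p μ, eLpNorm (fun s => j (g s)) p μ = eLpNorm (⇑(Rinv g)) p μ) ∧
    -- … and it has dense range in `L^p(Ω,X_{-1}^A)`
    ∀ F : Lp Xm1 p μ, ∀ ε : ℝ, 0 < ε → ∃ g : Lp X p μ,
      eLpNorm (fun s => F s - j (g s)) p μ < ENNReal.ofReal ε := by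
  refine ⟨fun g => j.comp_memLp' (Lp.memLp g), fun g => ?_, fun F ε hε => ?_⟩
  · refine eLpNorm_congr_norm_ae ?_
    filter_upwards [hRrep g] with s hs
    rw [hs, hjiso]
  · obtain ⟨g, hg⟩ := (j.denseRange_compLpL (μ := μ) hp hjdense).exists_dist_lt F hε
    exact ⟨g, by rw [← j.edist_compLpL, edist_lt_ofReal]; exact hg⟩

/-- (Corollary) For a single generator `(A, D(A))` of a `C₀`-semigroup on a
separable Banach space `X` with `0 ∈ ρ(A)`, and the constant-fiber multiplication operator
`(ℳf)(s) = A f(s)` on `L^p(Ω,X)`, the extrapolation space `(L^p(Ω,X))_{-1}(ℳ)` equals the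
Bochner space `L^p(Ω, X_{-1}^A)`: the natural inclusion `ι : L^p(Ω,X) → L^p(Ω,X_{-1}^A)` is
well defined, satisfies `‖ι(g)‖ = ‖ℳ⁻¹g‖_{L^p(Ω,X)}`, and has dense range, so the completion
of `L^p(Ω,X)` with respect to `f ↦ ‖ℳ⁻¹f‖` is isometrically isomorphic to `L^p(Ω,X_{-1}^A)`
via the continuous extension of `ι`. -/
theorem constant_fiber_extrapolation_space_eq_bochner_space
    {Ω : Type*} [MeasurableSpace Ω] {μ : Measure Ω} [SigmaFinite μ]
    {X : Type*} [NormedAddCommGroup X] [NormedSpace ℂ X] [CompleteSpace X]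
    [TopologicalSpace.SeparableSpace X]
    {p : ℝ≥0∞} [Fact (1 ≤ p)] (hp : p ≠ ∞)
    -- `A` generates a `C₀`-semigroup on `X` and `0 ∈ ρ(A)`, with inverse `Ainv = A⁻¹`
    (A : X →ₗ.[ℂ] X)
    (T : ℝ → X →L[ℂ] X) (hT : IsC0Semigroup T) (hgen : IsGenerator T A)
    (Ainv : X →L[ℂ] X) (hAinv : IsBoundedInverse A Ainv)
    -- the extrapolation space `X_{-1}^A`: completion of `X` w.r.t. `‖x‖_{-1} = ‖A⁻¹x‖`
    (Xm1 : Type*) [NormedAddCommGroup Xm1] [NormedSpace ℂ Xm1] [CompleteSpace Xm1]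
    (j : X →L[ℂ] Xm1) (hjiso : ∀ x : X, ‖j x‖ = ‖Ainv x‖) (hjdense : DenseRange j)
    -- the constant-fiber multiplication operator `ℳ`, with `ℳ⁻¹ = Rinv` acting as `A⁻¹` fiberwise
    (𝓜 : Lp X p μ →ₗ.[ℂ] Lp X p μ) (hMul : IsMulOp μ p (fun _ : Ω => A) 𝓜)
    (Rinv : Lp X p μ →L[ℂ] Lp X p μ) (hRinv : IsBoundedInverse 𝓜 Rinv)
    (hRrep : ∀ f : Lp X p μ, ∀ᵐ s ∂μ, (Rinv f) s = Ainv (f s)) :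
    -- `ι` is well defined into the Bochner space `L^p(Ω,X_{-1}^A)` …
    (∀ g : Lp X p μ, MemLp (fun s => j (g s)) p μ) ∧
    -- … it is isometric for the extrapolation norm: `‖ι(g)‖ = ‖ℳ⁻¹g‖_{L^p(Ω,X)}` …
    (∀ g : Lp X p μ, eLpNorm (fun s => j (g s)) p μ = eLpNorm (⇑(Rinv g)) p μ) ∧
    -- … and it has dense range in `L^p(Ω,X_{-1}^A)`
    ∀ F : Lp Xm1 p μ, ∀ ε : ℝ, 0 < ε → ∃ g : Lp X p μ,
      eLpNorm (fun s => F s - j (g s)) p μ < ENNReal.ofReal ε :=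
  constant_fiber_extrapolation_space_eq_bochner_space_general hp Ainv Xm1 j hjiso hjdense Rinv hRrep
end
end

section
/- Let (X_s, ‖·‖_s)_{s∈Ω} be a measurable Banach fiber bundle and 1 ≤ p < ∞. Then the L^p-fiber space L^p(Ω,(X_s)_{s∈Ω}) is a Banach space with respect to the L^p-fiber norm ‖f‖_p = (∫_Ω ‖f(s)‖_s^p dμ(s))^{1/p}; that is, it is a normed vector space which is complete. -/
open MeasureTheory Filter
open scoped ENNReal NNReal

noncomputable section

/-!
A function is fiber measurable iff all the distances `s ↦ ‖f s - b m s‖` are a.e. measurable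
(choose, among `b 0, …, b j`, the point nearest to `f s`), which makes fiber measurability stable
under sums, scalar multiples and a.e. limits. The norm axioms are those of the `L^p` seminorm of the
real function `s ↦ ‖f s‖`. For completeness, a fast subsequence of a Cauchy sequence satisfies
`‖F (φ (k+1)) s - F (φ k) s‖ < 2⁻ᵏ` eventually for a.e. `s` by Chebyshev and Borel–Cantelli, so it
converges fiberwise because the fibers are complete, and Fatou's lemma turns this into convergence
in the `L^p`-fiber norm.
-/

open Topology

theorem Complex.denseRange_ratCast_add_ratCast_mul_I :
    DenseRange fun q : ℚ × ℚ => (q.1 : ℂ) + q.2 * Complex.I := by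
  have h := (Complex.equivRealProdCLM.symm.surjective.denseRange).comp
    (Rat.denseRange_cast.prodMap Rat.denseRange_cast) Complex.equivRealProdCLM.symm.continuous
  convert h using 1
  funext q
  apply Complex.ext <;> simp

theorem measurable_comp_index {Ω β : Type*} [MeasurableSpace Ω] [MeasurableSpace β]
    {g : ℕ → Ω → β} (hg : ∀ n, Measurable (g n)) {k : Ω → ℕ} (hk : Measurable k) :
    Measurable fun s => g (k s) s :=
  (measurable_from_prod_countable_left (f := fun q : Ω × ℕ => g q.2 q.1) hg).comp
    (measurable_id.prodMk hk)

theorem exists_measurable_argmin {Ω : Type*} [MeasurableSpace Ω] {d : ℕ → Ω → ℝ}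
    (hd : ∀ m, Measurable (d m)) (j : ℕ) :
    ∃ k : Ω → ℕ, Measurable k ∧ ∀ s, k s ≤ j ∧ ∀ i ≤ j, d (k s) s ≤ d i s := by
  induction j with
  | zero =>
    exact ⟨fun _ => 0, measurable_const, fun _ => ⟨le_rfl, fun i hi => by rw [Nat.le_zero.1 hi]⟩⟩
  | succ j ih =>
    obtain ⟨k, hk, hmin⟩ := ih
    refine ⟨fun s => if d (j + 1) s < d (k s) s then j + 1 else k s,
      Measurable.ite (measurableSet_lt (hd _) (measurable_comp_index hd hk)) measurable_const hk,
      fun s => ?_⟩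
    obtain ⟨hkj, hkmin⟩ := hmin s
    dsimp only
    split_ifs with h
    · refine ⟨le_rfl, fun i hi => ?_⟩
      rcases Nat.le_succ_iff.1 hi with hi | rfl
      · exact h.le.trans (hkmin i hi)
      · exact le_rfl
    · refine ⟨hkj.trans (Nat.le_succ j), fun i hi => ?_⟩
      rcases Nat.le_succ_iff.1 hi with hi | rfl
      · exact hkmin i hi
      · exact not_lt.1 h

namespace FiberMeasurable

variable {Ω : Type*} [MeasurableSpace Ω] {μ : Measure Ω}
  {Xf : Ω → Type*} [∀ s, NormedAddCommGroup (Xf s)] {b : ℕ → ∀ s, Xf s}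

theorem basis (m : ℕ) : FiberMeasurable μ b (b m) :=
  ⟨fun _ _ => m,
    fun _ => ⟨measurable_const, (Set.finite_singleton m).subset Set.range_const_subset⟩,
    ae_of_all _ fun _ => tendsto_const_nhds⟩

theorem aemeasurable_norm (hnorm : ∀ k, Measurable fun s => ‖b k s‖) {f : ∀ s, Xf s}
    (hf : FiberMeasurable μ b f) : AEMeasurable (fun s => ‖f s‖) μ := by
  obtain ⟨k, hk, hlim⟩ := hf
  exact aemeasurable_of_tendsto_metrizable_ae atTop
    (fun j => (measurable_comp_index hnorm (hk j).1).aemeasurable) (hlim.mono fun s hs => hs.norm)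

theorem map₂ {op : ∀ s, Xf s → Xf s → Xf s}
    (hop : ∀ s, Continuous fun x : Xf s × Xf s => op s x.1 x.2)
    (hclosed : ∀ k l, ∃ m, ∀ s, b m s = op s (b k s) (b l s))
    {f g : ∀ s, Xf s} (hf : FiberMeasurable μ b f) (hg : FiberMeasurable μ b g) :
    FiberMeasurable μ b fun s => op s (f s) (g s) := by
  choose c hc using hclosed
  obtain ⟨k, hk, hkf⟩ := hf
  obtain ⟨l, hl, hlg⟩ := hg
  refine ⟨fun j s => c (k j s) (l j s), fun j => ⟨?_, ?_⟩, ?_⟩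
  · exact (measurable_of_countable (Function.uncurry c)).comp ((hk j).1.prodMk (hl j).1)
  · refine ((hk j).2.image2 c (hl j).2).subset ?_
    rintro _ ⟨s, rfl⟩
    exact Set.mem_image2_of_mem ⟨s, rfl⟩ ⟨s, rfl⟩
  · filter_upwards [hkf, hlg] with s hks hls
    simp only [hc]
    exact ((hop s).tendsto _).comp (hks.prodMk_nhds hls)

theorem add (hadd : ∀ k l, ∃ m, ∀ s, b m s = b k s + b l s) {f g : ∀ s, Xf s}
    (hf : FiberMeasurable μ b f) (hg : FiberMeasurable μ b g) :
    FiberMeasurable μ b fun s => f s + g s :=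
  map₂ (fun _ => continuous_add) hadd hf hg

theorem sub (hsub : ∀ k l, ∃ m, ∀ s, b m s = b k s - b l s) {f g : ∀ s, Xf s}
    (hf : FiberMeasurable μ b f) (hg : FiberMeasurable μ b g) :
    FiberMeasurable μ b fun s => f s - g s :=
  map₂ (fun _ => continuous_sub) hsub hf hg

theorem const_smul [∀ s, NormedSpace ℂ (Xf s)]
    (hsmul : ∀ (q r : ℚ) (k : ℕ), ∃ m, ∀ s, b m s = ((q : ℂ) + (r : ℂ) * Complex.I) • b k s)
    (c : ℂ) {f : ∀ s, Xf s} (hf : FiberMeasurable μ b f) :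
    FiberMeasurable μ b fun s => c • f s := by
  choose e he using hsmul
  obtain ⟨z, hz, hzc⟩ := mem_closure_iff_seq_limit.1
    (Complex.denseRange_ratCast_add_ratCast_mul_I.closure_range ▸ Set.mem_univ c)
  choose q hq using hz
  obtain ⟨k, hk, hkf⟩ := hf
  refine ⟨fun j s => e (q j).1 (q j).2 (k j s), fun j => ⟨(measurable_of_countable _).comp (hk j).1,
    ((hk j).2.image _).subset (Set.range_comp _ _).subset⟩, ?_⟩
  filter_upwards [hkf] with s hs
  simp only [he, hq]
  exact hzc.smul hs

theorem of_forall_aemeasurable_norm_sub (hdense : ∀ s, DenseRange fun k => b k s)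
    {f : ∀ s, Xf s} (h : ∀ m, AEMeasurable (fun s => ‖f s - b m s‖) μ) :
    FiberMeasurable μ b f := by
  set d : ℕ → Ω → ℝ := fun m => (h m).mk
  choose k hk hmin using exists_measurable_argmin (d := d) fun m => (h m).measurable_mk
  have hd : ∀ᵐ s ∂μ, ∀ m, ‖f s - b m s‖ = d m s := ae_all_iff.2 fun m => (h m).ae_eq_mk
  refine ⟨k, fun j => ⟨hk j, (Set.finite_Iic j).subset ?_⟩, ?_⟩
  · rintro _ ⟨s, rfl⟩
    exact (hmin j s).1
  filter_upwards [hd] with s hs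
  refine Metric.tendsto_atTop.2 fun ε hε => ?_
  obtain ⟨m, hm⟩ := (hdense s).exists_dist_lt (f s) hε
  refine ⟨m, fun j hj => ?_⟩
  calc dist (b (k j s) s) (f s) = d (k j s) s := by rw [dist_eq_norm', hs]
    _ ≤ d m s := (hmin j s).2 m hj
    _ < ε := by rwa [← hs, ← dist_eq_norm]

theorem of_ae_tendsto (hnorm : ∀ k, Measurable fun s => ‖b k s‖)
    (hsub : ∀ k l, ∃ m, ∀ s, b m s = b k s - b l s) (hdense : ∀ s, DenseRange fun k => b k s)
    {F : ℕ → ∀ s, Xf s} (hF : ∀ n, FiberMeasurable μ b (F n)) {f : ∀ s, Xf s}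
    (hlim : ∀ᵐ s ∂μ, Tendsto (fun n => F n s) atTop (𝓝 (f s))) :
    FiberMeasurable μ b f :=
  of_forall_aemeasurable_norm_sub hdense fun m =>
    aemeasurable_of_tendsto_metrizable_ae atTop
      (fun n => ((hF n).sub hsub (basis m)).aemeasurable_norm hnorm)
      (hlim.mono fun _ hs => (hs.sub tendsto_const_nhds).norm)

end FiberMeasurable

theorem IsFiberBasis.exists_eq_sub {Ω : Type*} [MeasurableSpace Ω] {Xf : Ω → Type*}
    [∀ s, NormedAddCommGroup (Xf s)] [∀ s, NormedSpace ℂ (Xf s)] {b : ℕ → ∀ s, Xf s}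
    (hb : IsFiberBasis b) (k l : ℕ) : ∃ m, ∀ s, b m s = b k s - b l s := by
  obtain ⟨-, -, hadd, hsmul, -⟩ := hb
  obtain ⟨n, hn⟩ := hsmul (-1) 0 l
  obtain ⟨m, hm⟩ := hadd k n
  exact ⟨m, fun s => by simp [hm, hn, sub_eq_add_neg]⟩

section FiberLpNorm

variable {Ω : Type*} [MeasurableSpace Ω] {μ : Measure Ω}
  {Xf : Ω → Type*} [∀ s, NormedAddCommGroup (Xf s)] {p : ℝ}

theorem lintegral_ofReal_norm_rpow_rpow_eq_eLpNorm' (hp : 0 ≤ p) (f : ∀ s, Xf s) :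
    (∫⁻ s, ENNReal.ofReal (‖f s‖ ^ p) ∂μ) ^ (1 / p) = eLpNorm' (fun s => ‖f s‖) p μ := by
  simp only [eLpNorm', norm_norm, ← ofReal_norm, ENNReal.ofReal_rpow_of_nonneg (norm_nonneg _) hp]

theorem lintegral_ofReal_norm_rpow_rpow_le_of_norm_le (hp : 1 ≤ p) {f g h : ∀ s, Xf s}
    (hg : AEMeasurable (fun s => ‖g s‖) μ) (hh : AEMeasurable (fun s => ‖h s‖) μ)
    (hle : ∀ s, ‖f s‖ ≤ ‖g s‖ + ‖h s‖) :
    (∫⁻ s, ENNReal.ofReal (‖f s‖ ^ p) ∂μ) ^ (1 / p)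
      ≤ (∫⁻ s, ENNReal.ofReal (‖g s‖ ^ p) ∂μ) ^ (1 / p)
        + (∫⁻ s, ENNReal.ofReal (‖h s‖ ^ p) ∂μ) ^ (1 / p) := by
  have hp0 : 0 ≤ p := zero_le_one.trans hp
  simp only [lintegral_ofReal_norm_rpow_rpow_eq_eLpNorm' hp0]
  calc eLpNorm' (fun s => ‖f s‖) p μ ≤ eLpNorm' ((fun s => ‖g s‖) + fun s => ‖h s‖) p μ :=
        eLpNorm'_mono_ae hp0 (ae_of_all _ fun s => by
          simpa [abs_of_nonneg (add_nonneg (norm_nonneg (g s)) (norm_nonneg (h s)))] using hle s)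
    _ ≤ _ := eLpNorm'_add_le hg.aestronglyMeasurable hh.aestronglyMeasurable hp

theorem lintegral_ofReal_norm_rpow_lt_top_of_norm_le (hp : 1 ≤ p) {f g h : ∀ s, Xf s}
    (hg : AEMeasurable (fun s => ‖g s‖) μ) (hh : AEMeasurable (fun s => ‖h s‖) μ)
    (hle : ∀ s, ‖f s‖ ≤ ‖g s‖ + ‖h s‖)
    (hgp : ∫⁻ s, ENNReal.ofReal (‖g s‖ ^ p) ∂μ < ⊤)
    (hhp : ∫⁻ s, ENNReal.ofReal (‖h s‖ ^ p) ∂μ < ⊤) :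
    ∫⁻ s, ENNReal.ofReal (‖f s‖ ^ p) ∂μ < ⊤ := by
  have hp' : 0 < 1 / p := by have := zero_lt_one.trans_le hp; positivity
  rw [← ENNReal.rpow_lt_top_iff_of_pos hp'] at hgp hhp ⊢
  exact (lintegral_ofReal_norm_rpow_rpow_le_of_norm_le hp hg hh hle).trans_lt
    (ENNReal.add_lt_top.2 ⟨hgp, hhp⟩)

theorem lintegral_ofReal_norm_smul_rpow {𝕜 : Type*} [NormedField 𝕜] [∀ s, NormedSpace 𝕜 (Xf s)]
    (c : 𝕜) (f : ∀ s, Xf s) :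
    ∫⁻ s, ENNReal.ofReal (‖c • f s‖ ^ p) ∂μ
      = ENNReal.ofReal (‖c‖ ^ p) * ∫⁻ s, ENNReal.ofReal (‖f s‖ ^ p) ∂μ := by
  simp only [norm_smul, Real.mul_rpow (norm_nonneg _) (norm_nonneg _),
    ENNReal.ofReal_mul (Real.rpow_nonneg (norm_nonneg c) p)]
  exact lintegral_const_mul' _ _ ENNReal.ofReal_ne_top

theorem lintegral_ofReal_norm_smul_rpow_rpow {𝕜 : Type*} [NormedField 𝕜]
    [∀ s, NormedSpace 𝕜 (Xf s)] (hp : 0 < p) (c : 𝕜) (f : ∀ s, Xf s) :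
    (∫⁻ s, ENNReal.ofReal (‖c • f s‖ ^ p) ∂μ) ^ (1 / p)
      = ENNReal.ofReal ‖c‖ * (∫⁻ s, ENNReal.ofReal (‖f s‖ ^ p) ∂μ) ^ (1 / p) := by
  rw [lintegral_ofReal_norm_smul_rpow, ENNReal.mul_rpow_of_nonneg _ _ (by positivity),
    ← ENNReal.ofReal_rpow_of_nonneg (norm_nonneg c) hp.le, ← ENNReal.rpow_mul,
    mul_one_div_cancel hp.ne', ENNReal.rpow_one]

theorem lintegral_ofReal_norm_rpow_eq_zero_iff (hp : 0 < p) {f : ∀ s, Xf s}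
    (hf : AEMeasurable (fun s => ‖f s‖) μ) :
    ∫⁻ s, ENNReal.ofReal (‖f s‖ ^ p) ∂μ = 0 ↔ ∀ᵐ s ∂μ, f s = 0 := by
  rw [lintegral_eq_zero_iff' (hf.pow_const p).ennreal_ofReal]
  refine eventually_congr (ae_of_all _ fun s => ?_)
  rw [Pi.zero_apply, ENNReal.ofReal_eq_zero, (Real.rpow_nonneg (norm_nonneg _) p).ge_iff_eq',
    Real.rpow_eq_zero (norm_nonneg _) hp.ne', norm_eq_zero]

end FiberLpNorm

theorem ENNReal.exists_pos_ofReal_rpow_lt {p : ℝ} (hp : 0 < p) {ε : ℝ≥0∞} (hε : 0 < ε) :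
    ∃ δ : ℝ, 0 < δ ∧ ENNReal.ofReal (δ ^ p) < ε := by
  obtain ⟨r, -, hr, hrε⟩ := ENNReal.lt_iff_exists_real_btwn.1 hε
  have hr0 : 0 < r := ENNReal.ofReal_pos.1 hr
  exact ⟨r ^ p⁻¹, Real.rpow_pos_of_pos hr0 _, by rwa [Real.rpow_inv_rpow hr0.le hp.ne']⟩

section Completeness

variable {Ω : Type*} [MeasurableSpace Ω] {μ : Measure Ω}
  {Xf : Ω → Type*} [∀ s, NormedAddCommGroup (Xf s)] {p : ℝ}

theorem ae_eventually_lt_of_lintegral_rpow_le {d : ℕ → Ω → ℝ} (hd : ∀ k, AEMeasurable (d k) μ)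
    (hp : 0 ≤ p) {t : ℕ → ℝ} (ht : ∀ k, 0 < t k) {c : ℕ → ℝ≥0∞} (hc : ∑' k, c k ≠ ⊤)
    (h : ∀ k, ∫⁻ s, ENNReal.ofReal (d k s ^ p) ∂μ ≤ c k * ENNReal.ofReal (t k ^ p)) :
    ∀ᵐ s ∂μ, ∀ᶠ k in atTop, d k s < t k := by
  have hmeas : ∀ k, μ {s | t k ≤ d k s} ≤ c k := fun k => by
    have htp : ENNReal.ofReal (t k ^ p) ≠ 0 := by simpa using Real.rpow_pos_of_pos (ht k) p
    calc μ {s | t k ≤ d k s} ≤ μ {s | ENNReal.ofReal (t k ^ p) ≤ ENNReal.ofReal (d k s ^ p)} :=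
          measure_mono fun s hs => ENNReal.ofReal_le_ofReal (Real.rpow_le_rpow (ht k).le hs hp)
      _ ≤ (∫⁻ s, ENNReal.ofReal (d k s ^ p) ∂μ) / ENNReal.ofReal (t k ^ p) :=
          meas_ge_le_lintegral_div ((hd k).pow_const p).ennreal_ofReal htp ENNReal.ofReal_ne_top
      _ ≤ c k := ENNReal.div_le_of_le_mul (h k)
  filter_upwards [ae_eventually_notMem (ne_top_of_le_ne_top hc (ENNReal.tsum_le_tsum hmeas))]
    with s hs
  exact hs.mono fun k hk => not_le.1 hk

theorem exists_strictMono_ae_cauchySeq_of_cauchy (hp : 0 < p) {F : ℕ → ∀ s, Xf s}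
    (hF : ∀ m n, AEMeasurable (fun s => ‖F m s - F n s‖) μ)
    (hcauchy : ∀ ε : ℝ, 0 < ε → ∃ N₀ : ℕ, ∀ m n : ℕ, N₀ ≤ m → N₀ ≤ n →
      (∫⁻ s, ENNReal.ofReal (‖F m s - F n s‖ ^ p) ∂μ) < ENNReal.ofReal (ε ^ p)) :
    ∃ φ : ℕ → ℕ, StrictMono φ ∧ ∀ᵐ s ∂μ, CauchySeq fun k => F (φ k) s := by
  set t : ℕ → ℝ := fun k => (2⁻¹ : ℝ) ^ k
  -- Chebyshev at level `t k` costs a factor `t k ^ p` and leaves the summable `t k ^ p`.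
  obtain ⟨φ, hφ, hfast⟩ := extraction_forall_of_eventually (P := fun k N => ∀ m, N ≤ m →
      ∫⁻ s, ENNReal.ofReal (‖F m s - F N s‖ ^ p) ∂μ < ENNReal.ofReal ((t k * t k) ^ p)) fun k => by
    obtain ⟨N₀, hN₀⟩ := hcauchy (t k * t k) (by positivity)
    exact eventually_atTop.2 ⟨N₀, fun N hN m hm => hN₀ m N (hN.trans hm) hN⟩
  have hgeom : ∑' k, ENNReal.ofReal (t k ^ p) ≠ ⊤ := by
    have hr : ENNReal.ofReal ((2⁻¹ : ℝ) ^ p) < 1 :=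
      ENNReal.ofReal_lt_one.2 (Real.rpow_lt_one (by norm_num) (by norm_num) hp)
    simp only [t, ← Real.rpow_pow_comm (by norm_num : (0 : ℝ) ≤ 2⁻¹),
      ENNReal.ofReal_pow (Real.rpow_nonneg (by norm_num : (0 : ℝ) ≤ 2⁻¹) p), ENNReal.tsum_geometric]
    exact ENNReal.inv_ne_top.2 (tsub_pos_iff_lt.2 hr).ne'
  have hsmall := ae_eventually_lt_of_lintegral_rpow_le (fun k => hF (φ (k + 1)) (φ k)) hp.le
    (fun k => by positivity : ∀ k, 0 < t k) hgeom fun k => by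
      rw [← ENNReal.ofReal_mul (by positivity), ← Real.mul_rpow (by positivity) (by positivity)]
      exact (hfast k _ (hφ (Nat.lt_succ_self k)).le).le
  refine ⟨φ, hφ, hsmall.mono fun s hs => cauchySeq_of_summable_dist ?_⟩
  refine .of_norm_bounded_eventually (summable_geometric_of_lt_one (r := 2⁻¹) (by norm_num)
    (by norm_num)) ?_
  rw [Nat.cofinite_eq_atTop]
  exact hs.mono fun k hk => by rw [Real.norm_of_nonneg dist_nonneg, dist_eq_norm']; exact hk.le

theorem lintegral_ofReal_norm_sub_rpow_le_of_ae_tendsto (hp : 0 ≤ p) {G : ℕ → ∀ s, Xf s}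
    {f g : ∀ s, Xf s} (hG : ∀ k, AEMeasurable (fun s => ‖g s - G k s‖) μ)
    (hlim : ∀ᵐ s ∂μ, Tendsto (fun k => G k s) atTop (𝓝 (f s))) {ε : ℝ≥0∞}
    (hε : ∀ᶠ k in atTop, ∫⁻ s, ENNReal.ofReal (‖g s - G k s‖ ^ p) ∂μ ≤ ε) :
    ∫⁻ s, ENNReal.ofReal (‖g s - f s‖ ^ p) ∂μ ≤ ε :=
  calc ∫⁻ s, ENNReal.ofReal (‖g s - f s‖ ^ p) ∂μ
      = ∫⁻ s, liminf (fun k => ENNReal.ofReal (‖g s - G k s‖ ^ p)) atTop ∂μ :=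
        lintegral_congr_ae <| hlim.mono fun _ hs => .symm <| Tendsto.liminf_eq <|
          (ENNReal.continuous_ofReal.tendsto _).comp
            ((tendsto_const_nhds.sub hs).norm.rpow_const (Or.inr hp))
    _ ≤ liminf (fun k => ∫⁻ s, ENNReal.ofReal (‖g s - G k s‖ ^ p) ∂μ) atTop :=
        lintegral_liminf_le' fun k => ((hG k).pow_const p).ennreal_ofReal
    _ ≤ ε := liminf_le_of_frequently_le' hε.frequently

theorem tendsto_lintegral_of_cauchy_of_ae_tendsto (hp : 0 < p) {F : ℕ → ∀ s, Xf s}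
    (hF : ∀ m n, AEMeasurable (fun s => ‖F m s - F n s‖) μ)
    (hcauchy : ∀ ε : ℝ, 0 < ε → ∃ N₀ : ℕ, ∀ m n : ℕ, N₀ ≤ m → N₀ ≤ n →
      (∫⁻ s, ENNReal.ofReal (‖F m s - F n s‖ ^ p) ∂μ) < ENNReal.ofReal (ε ^ p))
    {φ : ℕ → ℕ} (hφ : Tendsto φ atTop atTop) {f : ∀ s, Xf s}
    (hlim : ∀ᵐ s ∂μ, Tendsto (fun k => F (φ k) s) atTop (𝓝 (f s))) :
    Tendsto (fun n => ∫⁻ s, ENNReal.ofReal (‖F n s - f s‖ ^ p) ∂μ) atTop (𝓝 0) := by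
  refine ENNReal.tendsto_nhds_zero.2 fun ε hε => ?_
  obtain ⟨δ, hδ, hδε⟩ := ENNReal.exists_pos_ofReal_rpow_lt hp hε
  obtain ⟨N₀, hN₀⟩ := hcauchy δ hδ
  filter_upwards [eventually_ge_atTop N₀] with n hn
  refine (lintegral_ofReal_norm_sub_rpow_le_of_ae_tendsto hp.le (fun k => hF _ _) hlim ?_).trans
    hδε.le
  filter_upwards [hφ.eventually_ge_atTop N₀] with k hk
  exact (hN₀ n (φ k) hn hk).le

end Completeness

namespace FiberPIntegrable

variable {Ω : Type*} [MeasurableSpace Ω] {μ : Measure Ω}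
  {Xf : Ω → Type*} [∀ s, NormedAddCommGroup (Xf s)] {b : ℕ → ∀ s, Xf s} {p : ℝ}

theorem add (hnorm : ∀ k, Measurable fun s => ‖b k s‖)
    (hadd : ∀ k l, ∃ m, ∀ s, b m s = b k s + b l s) (hp : 1 ≤ p) {f g : ∀ s, Xf s}
    (hf : FiberPIntegrable μ b p f) (hg : FiberPIntegrable μ b p g) :
    FiberPIntegrable μ b p fun s => f s + g s :=
  ⟨hf.1.add hadd hg.1, lintegral_ofReal_norm_rpow_lt_top_of_norm_le hp
    (hf.1.aemeasurable_norm hnorm) (hg.1.aemeasurable_norm hnorm) (fun _ => norm_add_le _ _)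
    hf.2 hg.2⟩

theorem const_smul [∀ s, NormedSpace ℂ (Xf s)]
    (hsmul : ∀ (q r : ℚ) (k : ℕ), ∃ m, ∀ s, b m s = ((q : ℂ) + (r : ℂ) * Complex.I) • b k s)
    (c : ℂ) {f : ∀ s, Xf s} (hf : FiberPIntegrable μ b p f) :
    FiberPIntegrable μ b p fun s => c • f s := by
  refine ⟨hf.1.const_smul hsmul c, ?_⟩
  rw [lintegral_ofReal_norm_smul_rpow]
  exact ENNReal.mul_lt_top ENNReal.ofReal_lt_top hf.2

theorem exists_tendsto_of_cauchy [∀ s, CompleteSpace (Xf s)]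
    (hnorm : ∀ k, Measurable fun s => ‖b k s‖)
    (hsub : ∀ k l, ∃ m, ∀ s, b m s = b k s - b l s) (hdense : ∀ s, DenseRange fun k => b k s)
    (hp : 1 ≤ p) {F : ℕ → ∀ s, Xf s} (hF : ∀ n, FiberPIntegrable μ b p (F n))
    (hcauchy : ∀ ε : ℝ, 0 < ε → ∃ N₀ : ℕ, ∀ m n : ℕ, N₀ ≤ m → N₀ ≤ n →
      (∫⁻ s, ENNReal.ofReal (‖F m s - F n s‖ ^ p) ∂μ) < ENNReal.ofReal (ε ^ p)) :
    ∃ f : ∀ s, Xf s, FiberPIntegrable μ b p f ∧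
      Tendsto (fun n => ∫⁻ s, ENNReal.ofReal (‖F n s - f s‖ ^ p) ∂μ) atTop (𝓝 0) := by
  have hp0 : 0 < p := zero_lt_one.trans_le hp
  have hFsub (m n : ℕ) : AEMeasurable (fun s => ‖F m s - F n s‖) μ :=
    ((hF m).1.sub hsub (hF n).1).aemeasurable_norm hnorm
  obtain ⟨φ, hφ, hcauchySeq⟩ := exists_strictMono_ae_cauchySeq_of_cauchy hp0 hFsub hcauchy
  set f : ∀ s, Xf s := fun s => limUnder atTop fun k => F (φ k) s
  have hlim : ∀ᵐ s ∂μ, Tendsto (fun k => F (φ k) s) atTop (𝓝 (f s)) :=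
    hcauchySeq.mono fun _ hs => tendsto_nhds_limUnder (cauchySeq_tendsto_of_complete hs)
  have hf : FiberMeasurable μ b f := .of_ae_tendsto hnorm hsub hdense (fun k => (hF (φ k)).1) hlim
  have htendsto :=
    tendsto_lintegral_of_cauchy_of_ae_tendsto hp0 hFsub hcauchy hφ.tendsto_atTop hlim
  obtain ⟨N, hN⟩ := (htendsto.eventually (gt_mem_nhds zero_lt_one)).exists
  refine ⟨f, ⟨hf, ?_⟩, htendsto⟩
  exact lintegral_ofReal_norm_rpow_lt_top_of_norm_le hp ((hF N).1.aemeasurable_norm hnorm)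
    (((hF N).1.sub hsub hf).aemeasurable_norm hnorm) (fun _ => norm_le_insert _ _) (hF N).2
    (hN.trans ENNReal.one_lt_top)

end FiberPIntegrable

theorem lp_fiber_space_is_banach_general
    {Ω : Type*} [MeasurableSpace Ω] {μ : Measure Ω}
    {Xf : Ω → Type*} [∀ s, NormedAddCommGroup (Xf s)] [∀ s, NormedSpace ℂ (Xf s)]
    [∀ s, CompleteSpace (Xf s)]
    (b : ℕ → ∀ s, Xf s) (hb : IsFiberBasis b)
    (p : ℝ) (hp : 1 ≤ p) :
    -- the fiber `p`-integrable functions form a vector space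
    (∀ f g : ∀ s, Xf s, FiberPIntegrable μ b p f → FiberPIntegrable μ b p g →
      FiberPIntegrable μ b p (fun s => f s + g s)) ∧
    (∀ (c : ℂ) (f : ∀ s, Xf s), FiberPIntegrable μ b p f →
      FiberPIntegrable μ b p (fun s => c • f s)) ∧
    -- the `L^p`-fiber norm is a norm on the space of equivalence classes:
    -- triangle inequality, absolute homogeneity, and definiteness up to `μ`-a.e. equality
    (∀ f g : ∀ s, Xf s, FiberPIntegrable μ b p f → FiberPIntegrable μ b p g →
      (∫⁻ s, ENNReal.ofReal (‖f s + g s‖ ^ p) ∂μ) ^ (1 / p)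
        ≤ (∫⁻ s, ENNReal.ofReal (‖f s‖ ^ p) ∂μ) ^ (1 / p)
          + (∫⁻ s, ENNReal.ofReal (‖g s‖ ^ p) ∂μ) ^ (1 / p)) ∧
    (∀ (c : ℂ) (f : ∀ s, Xf s), FiberPIntegrable μ b p f →
      (∫⁻ s, ENNReal.ofReal (‖c • f s‖ ^ p) ∂μ) ^ (1 / p)
        = ENNReal.ofReal ‖c‖ * (∫⁻ s, ENNReal.ofReal (‖f s‖ ^ p) ∂μ) ^ (1 / p)) ∧
    (∀ f : ∀ s, Xf s, FiberPIntegrable μ b p f →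
      ((∫⁻ s, ENNReal.ofReal (‖f s‖ ^ p) ∂μ) = 0 ↔ ∀ᵐ s ∂μ, f s = 0)) ∧
    -- completeness: every Cauchy sequence for the `L^p`-fiber norm converges
    ∀ F : ℕ → ∀ s, Xf s, (∀ n, FiberPIntegrable μ b p (F n)) →
      (∀ ε : ℝ, 0 < ε → ∃ N₀ : ℕ, ∀ m n : ℕ, N₀ ≤ m → N₀ ≤ n →
        (∫⁻ s, ENNReal.ofReal (‖F m s - F n s‖ ^ p) ∂μ) < ENNReal.ofReal (ε ^ p)) →
      ∃ f : ∀ s, Xf s, FiberPIntegrable μ b p f ∧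
        Tendsto (fun n => ∫⁻ s, ENNReal.ofReal (‖F n s - f s‖ ^ p) ∂μ) atTop (nhds 0) := by
  have hsub := hb.exists_eq_sub
  obtain ⟨hnorm, -, hadd, hsmul, hdense⟩ := hb
  have hp0 : 0 < p := zero_lt_one.trans_le hp
  have hmeas {f : ∀ s, Xf s} (hf : FiberPIntegrable μ b p f) : AEMeasurable (‖f ·‖) μ :=
    hf.1.aemeasurable_norm hnorm
  exact ⟨fun f g hf hg => hf.add hnorm hadd hp hg,
    fun c f hf => hf.const_smul hsmul c,
    fun f g hf hg => lintegral_ofReal_norm_rpow_rpow_le_of_norm_le hp (hmeas hf) (hmeas hg)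
      fun _ => norm_add_le _ _,
    fun c f _ => lintegral_ofReal_norm_smul_rpow_rpow hp0 c f,
    fun f hf => lintegral_ofReal_norm_rpow_eq_zero_iff hp0 (hmeas hf),
    fun F hF hcauchy => FiberPIntegrable.exists_tendsto_of_cauchy hnorm hsub hdense hp hF hcauchy⟩

/-- The `L^p`-fiber space `L^p(Ω,(X_s)_{s∈Ω})` over a measurable Banach fiber
bundle is a Banach space with the `L^p`-fiber norm `‖f‖_p = (∫ ‖f(s)‖_s^p dμ)^{1/p}`: the fiber
`p`-integrable functions form a vector space, the fiber norm satisfies the norm axioms (modulo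
`μ`-a.e. equality), and the space is complete. -/
theorem lp_fiber_space_is_banach
    {Ω : Type*} [MeasurableSpace Ω] {μ : Measure Ω} [SigmaFinite μ]
    {Xf : Ω → Type*} [∀ s, NormedAddCommGroup (Xf s)] [∀ s, NormedSpace ℂ (Xf s)]
    [∀ s, CompleteSpace (Xf s)]
    (b : ℕ → ∀ s, Xf s) (hb : IsFiberBasis b)
    (p : ℝ) (hp : 1 ≤ p) :
    -- the fiber `p`-integrable functions form a vector space
    (∀ f g : ∀ s, Xf s, FiberPIntegrable μ b p f → FiberPIntegrable μ b p g →
      FiberPIntegrable μ b p (fun s => f s + g s)) ∧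
    (∀ (c : ℂ) (f : ∀ s, Xf s), FiberPIntegrable μ b p f →
      FiberPIntegrable μ b p (fun s => c • f s)) ∧
    -- the `L^p`-fiber norm is a norm on the space of equivalence classes:
    -- triangle inequality, absolute homogeneity, and definiteness up to `μ`-a.e. equality
    (∀ f g : ∀ s, Xf s, FiberPIntegrable μ b p f → FiberPIntegrable μ b p g →
      (∫⁻ s, ENNReal.ofReal (‖f s + g s‖ ^ p) ∂μ) ^ (1 / p)
        ≤ (∫⁻ s, ENNReal.ofReal (‖f s‖ ^ p) ∂μ) ^ (1 / p)
          + (∫⁻ s, ENNReal.ofReal (‖g s‖ ^ p) ∂μ) ^ (1 / p)) ∧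
    (∀ (c : ℂ) (f : ∀ s, Xf s), FiberPIntegrable μ b p f →
      (∫⁻ s, ENNReal.ofReal (‖c • f s‖ ^ p) ∂μ) ^ (1 / p)
        = ENNReal.ofReal ‖c‖ * (∫⁻ s, ENNReal.ofReal (‖f s‖ ^ p) ∂μ) ^ (1 / p)) ∧
    (∀ f : ∀ s, Xf s, FiberPIntegrable μ b p f →
      ((∫⁻ s, ENNReal.ofReal (‖f s‖ ^ p) ∂μ) = 0 ↔ ∀ᵐ s ∂μ, f s = 0)) ∧
    -- completeness: every Cauchy sequence for the `L^p`-fiber norm converges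
    ∀ F : ℕ → ∀ s, Xf s, (∀ n, FiberPIntegrable μ b p (F n)) →
      (∀ ε : ℝ, 0 < ε → ∃ N₀ : ℕ, ∀ m n : ℕ, N₀ ≤ m → N₀ ≤ n →
        (∫⁻ s, ENNReal.ofReal (‖F m s - F n s‖ ^ p) ∂μ) < ENNReal.ofReal (ε ^ p)) →
      ∃ f : ∀ s, Xf s, FiberPIntegrable μ b p f ∧
        Tendsto (fun n => ∫⁻ s, ENNReal.ofReal (‖F n s - f s‖ ^ p) ∂μ) atTop (nhds 0) :=
  lp_fiber_space_is_banach_general b hb p hp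
end
end
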